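/- arXiv:2308.14662 — 5 statements merged into one kernel-verified Lean document; each statement's English description precedes it below -/
import Mathlib

section
/- Suppose (Ω¹(B), d_B) is a FODC on B such that Ω¹(B) is a σ-twisted B-bimodule, (Ω¹(H), d_H) is a bicovariant FODC on H, and the map d_{#σ}(b⊗h) = d_B b⊗h + b⊗d_H h satisfies the Leibniz rule on B#_σH with respect to the direct sum bimodule structure. Then necessarily d_B(σ(h⊗h')) = 0 for all h, h' ∈ H. -/
open TensorProduct

noncomputable section

/-- A finite representation `x ↦ ∑ fᵢ ⊗ gᵢ` of the value of a map into a tensor product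
(used to express Sweedler's notation faithfully). -/
def Rep2 (k : Type) [Field k] {M P Q : Type} [AddCommGroup M] [Module k M]
    [AddCommGroup P] [Module k P] [AddCommGroup Q] [Module k Q]
    (ρ : M →ₗ[k] P ⊗[k] Q) {ι : Type} (s : Finset ι) (f : ι → P) (g : ι → Q)
    (x : M) : Prop :=
  ∑ i ∈ s, f i ⊗ₜ[k] g i = ρ x

/-- A finite representation of the value of a map into a triple tensor product. -/
def Rep3 (k : Type) [Field k] {M P Q R : Type} [AddCommGroup M] [Module k M]
    [AddCommGroup P] [Module k P] [AddCommGroup Q] [Module k Q] [AddCommGroup R] [Module k R]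
    (ρ : M →ₗ[k] P ⊗[k] (Q ⊗[k] R)) {ι : Type} (s : Finset ι)
    (f : ι → P) (g : ι → Q) (e : ι → R) (x : M) : Prop :=
  ∑ i ∈ s, f i ⊗ₜ[k] (g i ⊗ₜ[k] e i) = ρ x

variable (k B H : Type) [Field k] [Ring B] [Algebra k B] [Ring H]
  [HopfAlgebra k H]

/-- The iterated comultiplication `h ↦ h₁ ⊗ (h₂ ⊗ h₃)`. -/
def Δ₂ : H →ₗ[k] H ⊗[k] (H ⊗[k] H) :=
  (TensorProduct.map LinearMap.id (Coalgebra.comul (R := k))) ∘ₗ Coalgebra.comul (R := k)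
structure TwistedSystem : Type 1 where
  act : H →ₗ[k] B →ₗ[k] B
  coc : H →ₗ[k] H →ₗ[k] B
  cocInv : H →ₗ[k] H →ₗ[k] B
  act_one : ∀ b : B, act 1 b = b
  act_unit : ∀ h : H, act h 1 = Coalgebra.counit (R := k) h • (1 : B)
  act_mul : ∀ (ι : Type) (s : Finset ι) (f g : ι → H) (h : H),
    Rep2 k (Coalgebra.comul (R := k)) s f g h → ∀ x y : B,
      act h (x * y) = ∑ i ∈ s, act (f i) x * act (g i) y
  conv_left : ∀ (ι ι' : Type) (s : Finset ι) (s' : Finset ι')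
      (f g : ι → H) (f' g' : ι' → H) (h h' : H),
    Rep2 k (Coalgebra.comul (R := k)) s f g h →
    Rep2 k (Coalgebra.comul (R := k)) s' f' g' h' →
      ∑ i ∈ s, ∑ j ∈ s', coc (f i) (f' j) * cocInv (g i) (g' j)
        = Coalgebra.counit (R := k) (h * h') • (1 : B)
  conv_right : ∀ (ι ι' : Type) (s : Finset ι) (s' : Finset ι')
      (f g : ι → H) (f' g' : ι' → H) (h h' : H),
    Rep2 k (Coalgebra.comul (R := k)) s f g h →
    Rep2 k (Coalgebra.comul (R := k)) s' f' g' h' →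
      ∑ i ∈ s, ∑ j ∈ s', cocInv (f i) (f' j) * coc (g i) (g' j)
        = Coalgebra.counit (R := k) (h * h') • (1 : B)
  twisted : ∀ (ι ι' : Type) (s : Finset ι) (s' : Finset ι')
      (f₁ : ι → H) (f₂ : ι → H) (f₃ : ι → H) (g₁ g₂ g₃ : ι' → H) (h h' : H),
    Rep3 k (Δ₂ k H) s f₁ f₂ f₃ h → Rep3 k (Δ₂ k H) s' g₁ g₂ g₃ h' → ∀ b : B,
      act h (act h' b) = ∑ i ∈ s, ∑ j ∈ s',
        coc (f₁ i) (g₁ j) * act (f₂ i * g₂ j) b * cocInv (f₃ i) (g₃ j)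
  coc_one_right : ∀ h : H, coc h 1 = Coalgebra.counit (R := k) h • (1 : B)
  coc_one_left : ∀ h : H, coc 1 h = Coalgebra.counit (R := k) h • (1 : B)
  cocycle : ∀ (ι ι' ι'' : Type) (s : Finset ι) (s' : Finset ι') (s'' : Finset ι'')
      (f₁ f₂ : ι → H) (g₁ g₂ : ι' → H) (e₁ e₂ : ι'' → H) (h h' h'' : H),
    Rep2 k (Coalgebra.comul (R := k)) s f₁ f₂ h →
    Rep2 k (Coalgebra.comul (R := k)) s' g₁ g₂ h' →
    Rep2 k (Coalgebra.comul (R := k)) s'' e₁ e₂ h'' →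
      ∑ i ∈ s, ∑ j ∈ s', ∑ l ∈ s'',
        act (f₁ i) (coc (g₁ j) (e₁ l)) * coc (f₂ i) (g₂ j * e₂ l)
      = ∑ i ∈ s, ∑ j ∈ s', coc (f₁ i) (g₁ j) * coc (f₂ i * g₂ j) h''

/-- The crossed product multiplication on `B ⊗ H`:
`(b ⊗ h)(b' ⊗ h') = b (h₁·b') σ(h₂ ⊗ h'₁) ⊗ h₃ h'₂`. -/
def IsCrossedMul (T : TwistedSystem k B H)
    (m : (B ⊗[k] H) →ₗ[k] (B ⊗[k] H) →ₗ[k] (B ⊗[k] H)) : Prop :=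
  ∀ (ι ι' : Type) (s : Finset ι) (s' : Finset ι')
    (f₁ f₂ f₃ : ι → H) (g₁ g₂ : ι' → H) (h h' : H),
    Rep3 k (Δ₂ k H) s f₁ f₂ f₃ h →
    Rep2 k (Coalgebra.comul (R := k)) s' g₁ g₂ h' → ∀ b b' : B,
      m (b ⊗ₜ[k] h) (b' ⊗ₜ[k] h') = ∑ i ∈ s, ∑ j ∈ s',
        (b * T.act (f₁ i) b' * T.coc (f₂ i) (g₁ j)) ⊗ₜ[k] (f₃ i * g₂ j)


/-- A bimodule over a `k`-algebra `A`, given by a pair of commuting bilinear actions. -/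
structure BimodData (A M : Type) [Ring A] [Algebra k A] [AddCommGroup M] [Module k M] where
  l : A →ₗ[k] M →ₗ[k] M
  r : M →ₗ[k] A →ₗ[k] M
  one_l : ∀ m : M, l 1 m = m
  r_one : ∀ m : M, r m 1 = m
  mul_l : ∀ (a b : A) (m : M), l (a * b) m = l a (l b m)
  r_mul : ∀ (m : M) (a b : A), r (r m a) b = r m (a * b)
  l_r : ∀ (a : A) (m : M) (b : A), r (l a m) b = l a (r m b)

/-- A first order differential calculus on `A` with bimodule of 1-forms `M`. -/
structure FODCData (A M : Type) [Ring A] [Algebra k A] [AddCommGroup M] [Module k M]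
    extends BimodData k A M where
  d : A →ₗ[k] M
  leibniz : ∀ a b : A, d (a * b) = r (d a) b + l a (d b)
  spanning : ∀ m : M, m ∈ Submodule.span k {z : M | ∃ a b : A, z = l a (d b)}

/-- An object of `ᴴ_H𝔐ᴴ_H`: an `H`-bimodule with compatible (bicovariant) left and right
`H`-comodule structures. -/
structure BicovBimod (N : Type) [AddCommGroup N] [Module k N]
    extends BimodData k H N where
  lco : N →ₗ[k] H ⊗[k] N
  rco : N →ₗ[k] N ⊗[k] H
  lco_counit : ∀ n : N, (TensorProduct.lid k N)
    ((TensorProduct.map (Coalgebra.counit (R := k)) LinearMap.id) (lco n)) = n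
  rco_counit : ∀ n : N, (TensorProduct.rid k N)
    ((TensorProduct.map LinearMap.id (Coalgebra.counit (R := k))) (rco n)) = n
  lco_coassoc : ∀ n : N, (TensorProduct.assoc k H H N)
      ((TensorProduct.map (Coalgebra.comul (R := k)) LinearMap.id) (lco n))
    = (TensorProduct.map LinearMap.id lco) (lco n)
  rco_coassoc : ∀ n : N, (TensorProduct.assoc k N H H)
      ((TensorProduct.map rco LinearMap.id) (rco n))
    = (TensorProduct.map LinearMap.id (Coalgebra.comul (R := k))) (rco n)
  bicomodule : ∀ n : N, (TensorProduct.map LinearMap.id rco) (lco n)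
    = (TensorProduct.assoc k H N H) ((TensorProduct.map lco LinearMap.id) (rco n))
  lco_lact : lco ∘ₗ TensorProduct.lift l
    = (TensorProduct.map (LinearMap.mul' k H) (TensorProduct.lift l)) ∘ₗ
      (TensorProduct.tensorTensorTensorComm k H H H N).toLinearMap ∘ₗ
      (TensorProduct.map (Coalgebra.comul (R := k)) lco)
  rco_lact : rco ∘ₗ TensorProduct.lift l
    = (TensorProduct.map (TensorProduct.lift l) (LinearMap.mul' k H)) ∘ₗ
      (TensorProduct.tensorTensorTensorComm k H H N H).toLinearMap ∘ₗ
      (TensorProduct.map (Coalgebra.comul (R := k)) rco)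
  lco_ract : lco ∘ₗ TensorProduct.lift r
    = (TensorProduct.map (LinearMap.mul' k H) (TensorProduct.lift r)) ∘ₗ
      (TensorProduct.tensorTensorTensorComm k H N H H).toLinearMap ∘ₗ
      (TensorProduct.map lco (Coalgebra.comul (R := k)))
  rco_ract : rco ∘ₗ TensorProduct.lift r
    = (TensorProduct.map (TensorProduct.lift r) (LinearMap.mul' k H)) ∘ₗ
      (TensorProduct.tensorTensorTensorComm k N H H H).toLinearMap ∘ₗ
      (TensorProduct.map rco (Coalgebra.comul (R := k)))

/-- A bicovariant first order differential calculus `(Ω¹(H), d_H)` on `H`. -/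
structure BicovFODC (N : Type) [AddCommGroup N] [Module k N]
    extends BicovBimod k H N where
  d : H →ₗ[k] N
  leibniz : ∀ a b : H, d (a * b) = r (d a) b + l a (d b)
  spanning : ∀ n : N, n ∈ Submodule.span k {z : N | ∃ a b : H, z = l a (d b)}
  d_lco : ∀ h : H, lco (d h) = (TensorProduct.map LinearMap.id d) (Coalgebra.comul (R := k) h)
  d_rco : ∀ h : H, rco (d h) = (TensorProduct.map d LinearMap.id) (Coalgebra.comul (R := k) h)

/-- The iterated left coaction `γ ↦ γ₋₂ ⊗ (γ₋₁ ⊗ γ₀)` of a bicovariant bimodule. -/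
def Λ₂ {N : Type} [AddCommGroup N] [Module k N] (W : BicovBimod k H N) :
    N →ₗ[k] H ⊗[k] (H ⊗[k] N) :=
  (TensorProduct.assoc k H H N).toLinearMap ∘ₗ
    (TensorProduct.map (Coalgebra.comul (R := k)) LinearMap.id) ∘ₗ W.lco

/-- The defining formula for the left `B #_σ H`-action on `(M ⊗ H) ⊕ (B ⊗ N)`:
`(b' ⊗ h')·(β ⊗ h + b ⊗ γ) = b'(h'₁·β)σ(h'₂ ⊗ h₁) ⊗ h'₃h₂ + b'(h'₁·b)σ(h'₂ ⊗ γ₋₁) ⊗ h'₃γ₀`. -/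
def IsCrossedLeftAct {M N : Type} [AddCommGroup M] [Module k M] [AddCommGroup N] [Module k N]
    (T : TwistedSystem k B H) (bim : BimodData k B M) (hact : H →ₗ[k] M →ₗ[k] M)
    (W : BicovBimod k H N)
    (L : (B ⊗[k] H) →ₗ[k] ((M ⊗[k] H) × (B ⊗[k] N)) →ₗ[k] ((M ⊗[k] H) × (B ⊗[k] N))) :
    Prop :=
  (∀ (b' : B) (h' : H) (β : M) (h : H) (ι ι' : Type) (s : Finset ι) (s' : Finset ι')
      (f₁ f₂ f₃ : ι → H) (g₁ g₂ : ι' → H),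
    Rep3 k (Δ₂ k H) s f₁ f₂ f₃ h' → Rep2 k (Coalgebra.comul (R := k)) s' g₁ g₂ h →
      L (b' ⊗ₜ[k] h') (β ⊗ₜ[k] h, 0)
        = (∑ i ∈ s, ∑ j ∈ s',
            bim.r (bim.l b' (hact (f₁ i) β)) (T.coc (f₂ i) (g₁ j)) ⊗ₜ[k] (f₃ i * g₂ j), 0))
  ∧ (∀ (b' : B) (h' : H) (b : B) (γ : N) (ι ι' : Type) (s : Finset ι) (s' : Finset ι')
      (f₁ f₂ f₃ : ι → H) (e₁ : ι' → H) (e₂ : ι' → N),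
    Rep3 k (Δ₂ k H) s f₁ f₂ f₃ h' → Rep2 k W.lco s' e₁ e₂ γ →
      L (b' ⊗ₜ[k] h') (0, b ⊗ₜ[k] γ)
        = (0, ∑ i ∈ s, ∑ j ∈ s',
            (b' * T.act (f₁ i) b * T.coc (f₂ i) (e₁ j)) ⊗ₜ[k] (W.l (f₃ i) (e₂ j))))

/-- The defining formula for the right `B #_σ H`-action on `(M ⊗ H) ⊕ (B ⊗ N)`:
`(β ⊗ h + b ⊗ γ)·(b' ⊗ h') = β(h₁·b')σ(h₂ ⊗ h'₁) ⊗ h₃h'₂ + b(γ₋₂·b')σ(γ₋₁ ⊗ h'₁) ⊗ γ₀h'₂`. -/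
def IsCrossedRightAct {M N : Type} [AddCommGroup M] [Module k M] [AddCommGroup N] [Module k N]
    (T : TwistedSystem k B H) (bim : BimodData k B M) (W : BicovBimod k H N)
    (Rt : ((M ⊗[k] H) × (B ⊗[k] N)) →ₗ[k] (B ⊗[k] H) →ₗ[k] ((M ⊗[k] H) × (B ⊗[k] N))) :
    Prop :=
  (∀ (β : M) (h : H) (b' : B) (h' : H) (ι ι' : Type) (s : Finset ι) (s' : Finset ι')
      (f₁ f₂ f₃ : ι → H) (g₁ g₂ : ι' → H),
    Rep3 k (Δ₂ k H) s f₁ f₂ f₃ h → Rep2 k (Coalgebra.comul (R := k)) s' g₁ g₂ h' →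
      Rt (β ⊗ₜ[k] h, 0) (b' ⊗ₜ[k] h')
        = (∑ i ∈ s, ∑ j ∈ s',
            bim.r (bim.r β (T.act (f₁ i) b')) (T.coc (f₂ i) (g₁ j)) ⊗ₜ[k] (f₃ i * g₂ j), 0))
  ∧ (∀ (b : B) (γ : N) (b' : B) (h' : H) (ι ι' : Type) (s : Finset ι) (s' : Finset ι')
      (e₁ e₂ : ι → H) (e₃ : ι → N) (g₁ g₂ : ι' → H),
    Rep3 k (Λ₂ k H W) s e₁ e₂ e₃ γ → Rep2 k (Coalgebra.comul (R := k)) s' g₁ g₂ h' →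
      Rt (0, b ⊗ₜ[k] γ) (b' ⊗ₜ[k] h')
        = (0, ∑ i ∈ s, ∑ j ∈ s',
            (b * T.act (e₁ i) b' * T.coc (e₂ i) (g₁ j)) ⊗ₜ[k] (W.r (e₃ i) (g₂ j))))

/-- The defining formula for the right `H`-coaction on `(M ⊗ H) ⊕ (B ⊗ N)`:
`β ⊗ h + b ⊗ γ ↦ β ⊗ h₁ ⊗ h₂ + b ⊗ γ₀ ⊗ γ₁`. -/
def IsCrossedCoact {M N : Type} [AddCommGroup M] [Module k M] [AddCommGroup N] [Module k N]
    (W : BicovBimod k H N)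
    (ρC : ((M ⊗[k] H) × (B ⊗[k] N)) →ₗ[k] ((M ⊗[k] H) × (B ⊗[k] N)) ⊗[k] H) : Prop :=
  (∀ (β : M) (h : H) (ι : Type) (s : Finset ι) (g₁ g₂ : ι → H),
    Rep2 k (Coalgebra.comul (R := k)) s g₁ g₂ h →
      ρC (β ⊗ₜ[k] h, 0)
        = ∑ i ∈ s, ((β ⊗ₜ[k] g₁ i, 0) : (M ⊗[k] H) × (B ⊗[k] N)) ⊗ₜ[k] g₂ i)
  ∧ (∀ (b : B) (γ : N) (ι : Type) (s : Finset ι) (n₀ : ι → N) (n₁ : ι → H),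
    Rep2 k W.rco s n₀ n₁ γ →
      ρC (0, b ⊗ₜ[k] γ)
        = ∑ i ∈ s, (((0 : M ⊗[k] H), b ⊗ₜ[k] n₀ i) : (M ⊗[k] H) × (B ⊗[k] N)) ⊗ₜ[k] n₁ i)

/-! Apply the Leibniz rule to `(1 ⊗ h)(1 ⊗ h')`. Since `d_B 1 = 0`, both factors are sent by
`d_#σ` into `B ⊗ Ω¹(H)`, and both crossed-product actions keep that summand inside itself, so the
`Ω¹(B) ⊗ H`-component of `d_#σ((1 ⊗ h)(1 ⊗ h')) = ∑ d_B σ(h₁ ⊗ h'₁) ⊗ h₂h'₂` vanishes. Applying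
`id ⊗ ε` to it leaves `d_B σ(h ⊗ h')`. -/

section Sweedler

variable {k}

variable {M P Q R : Type} [AddCommGroup M] [Module k M] [AddCommGroup P] [Module k P]
  [AddCommGroup Q] [Module k Q] [AddCommGroup R] [Module k R]

theorem exists_rep2 (ρ : M →ₗ[k] P ⊗[k] Q) (x : M) :
    ∃ (ι : Type) (s : Finset ι) (f : ι → P) (g : ι → Q), Rep2 k ρ s f g x := by
  classical
  obtain ⟨s, hs⟩ := TensorProduct.exists_finset (ρ x)
  exact ⟨P × Q, s, Prod.fst, Prod.snd, hs.symm⟩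

theorem exists_rep3 (ρ : M →ₗ[k] P ⊗[k] (Q ⊗[k] R)) (x : M) :
    ∃ (ι : Type) (s : Finset ι) (f : ι → P) (g : ι → Q) (e : ι → R),
      Rep3 k ρ s f g e x := by
  classical
  obtain ⟨s, hs⟩ := TensorProduct.exists_finset (ρ x)
  choose t ht using fun y : Q ⊗[k] R => TensorProduct.exists_finset y
  refine ⟨(_ : P × (Q ⊗[k] R)) × (Q × R), s.sigma fun p => t p.2,
    fun i => i.1.1, fun i => i.2.1, fun i => i.2.2, ?_⟩
  simp only [Rep3, Finset.sum_sigma, ← TensorProduct.tmul_sum, ← ht, hs]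

theorem rid_lTensor_map (φ : P →ₗ[k] Q) (ψ : R →ₗ[k] k) (z : P ⊗[k] R) :
    TensorProduct.rid k Q (LinearMap.lTensor Q ψ (TensorProduct.map φ LinearMap.id z))
      = φ (TensorProduct.rid k P (LinearMap.lTensor P ψ z)) := by
  induction z using TensorProduct.induction_on with
  | zero => simp
  | tmul p r => simp
  | add z₁ z₂ h₁ h₂ => simp only [map_add, h₁, h₂]

variable {C : Type} [AddCommGroup C] [Module k C] [Coalgebra k C]

theorem Rep2.sum_counit_smul {ι : Type} {s : Finset ι} {f g : ι → C} {x : C}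
    (hr : Rep2 k (Coalgebra.comul (R := k)) s f g x) :
    ∑ i ∈ s, Coalgebra.counit (R := k) (g i) • f i = x := by
  simpa [map_sum, Coalgebra.lTensor_counit_comul] using
    congrArg (fun z => TensorProduct.rid k C (LinearMap.lTensor C Coalgebra.counit z)) hr

end Sweedler

section CrossedProduct

variable {k B H}

theorem Rep3.sum_counit_mul_counit_smul {ι : Type} {s : Finset ι} {f₁ f₂ f₃ : ι → H} {h : H}
    (hr : Rep3 k (Δ₂ k H) s f₁ f₂ f₃ h) :
    ∑ i ∈ s, (Coalgebra.counit (R := k) (f₁ i) * Coalgebra.counit (R := k) (f₃ i)) • f₂ i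
      = h := by
  have hΔ₂ : (TensorProduct.map LinearMap.id
      (TensorProduct.rid k H ∘ₗ LinearMap.lTensor H Coalgebra.counit)) (Δ₂ k H h)
      = Coalgebra.comul (R := k) h := by
    have hcounit : (TensorProduct.rid k H).toLinearMap ∘ₗ
        LinearMap.lTensor H Coalgebra.counit ∘ₗ Coalgebra.comul = LinearMap.id := by
      ext a
      simp [Coalgebra.lTensor_counit_comul]
    rw [Δ₂, LinearMap.comp_apply, ← LinearMap.comp_apply (TensorProduct.map _ _),
      ← TensorProduct.map_comp, LinearMap.comp_assoc, hcounit, LinearMap.id_comp,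
      TensorProduct.map_id, LinearMap.id_apply]
  have := congrArg (fun z => TensorProduct.lid k H (LinearMap.rTensor H Coalgebra.counit
    (TensorProduct.map LinearMap.id
      (TensorProduct.rid k H ∘ₗ LinearMap.lTensor H Coalgebra.counit) z))) hr
  simpa [hΔ₂, map_sum, Coalgebra.rTensor_counit_comul, smul_smul, mul_comm] using this

theorem FODCData.d_one {A M : Type} [Ring A] [Algebra k A] [AddCommGroup M] [Module k M]
    (F : FODCData k A M) : F.d 1 = 0 := by
  have h := F.leibniz 1 1
  rwa [mul_one, F.r_one, F.one_l, right_eq_add] at h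

theorem IsCrossedMul.rid_lTensor_counit_one_tmul_mul {T : TwistedSystem k B H}
    {m : (B ⊗[k] H) →ₗ[k] (B ⊗[k] H) →ₗ[k] (B ⊗[k] H)} (hm : IsCrossedMul k B H T m)
    (h h' : H) :
    TensorProduct.rid k B (LinearMap.lTensor B Coalgebra.counit (m (1 ⊗ₜ h) (1 ⊗ₜ h')))
      = T.coc h h' := by
  obtain ⟨_, s, f₁, f₂, f₃, hh⟩ := exists_rep3 (Δ₂ k H) h
  obtain ⟨_, s', g₁, g₂, hh'⟩ := exists_rep2 (Coalgebra.comul (R := k)) h'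
  rw [hm _ _ s s' f₁ f₂ f₃ g₁ g₂ h h' hh hh' 1 1]
  conv_rhs => rw [← hh.sum_counit_mul_counit_smul, ← hh'.sum_counit_smul]
  simp only [T.act_unit, Algebra.mul_smul_comm, mul_one, Algebra.smul_mul_assoc, one_mul,
    map_sum, LinearMap.lTensor_tmul, Bialgebra.counit_mul, rid_tmul, smul_smul, map_smul,
    LinearMap.sum_apply, LinearMap.smul_apply, Finset.smul_sum]
  rw [Finset.sum_comm]
  refine Finset.sum_congr rfl fun _ _ => Finset.sum_congr rfl fun _ _ => ?_
  congr 1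
  ring

theorem IsCrossedRightAct.fst_apply_zero_eq_zero {M N : Type} [AddCommGroup M] [Module k M]
    [AddCommGroup N] [Module k N] {T : TwistedSystem k B H} {bim : BimodData k B M}
    {W : BicovBimod k H N}
    {Rt : ((M ⊗[k] H) × (B ⊗[k] N)) →ₗ[k] (B ⊗[k] H) →ₗ[k] ((M ⊗[k] H) × (B ⊗[k] N))}
    (hR : IsCrossedRightAct k B H T bim W Rt) (w : B ⊗[k] N) (y : B ⊗[k] H) :
    (Rt (0, w) y).1 = 0 := by
  induction w using TensorProduct.induction_on with
  | zero => rw [Prod.mk_zero_zero, map_zero]; rfl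
  | tmul b γ =>
    induction y using TensorProduct.induction_on with
    | zero => rw [map_zero]; rfl
    | tmul b' h' =>
      obtain ⟨_, s, e₁, e₂, e₃, hγ⟩ := exists_rep3 (Λ₂ k H W) γ
      obtain ⟨_, s', g₁, g₂, hh'⟩ := exists_rep2 (Coalgebra.comul (R := k)) h'
      rw [hR.2 b γ b' h' _ _ s s' e₁ e₂ e₃ g₁ g₂ hγ hh']
    | add y₁ y₂ h₁ h₂ => simp [h₁, h₂]
  | add w₁ w₂ h₁ h₂ =>
    rw [← zero_add (0 : M ⊗[k] H), ← Prod.mk_add_mk, map_add, LinearMap.add_apply,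
      Prod.fst_add, h₁, h₂, add_zero]

theorem IsCrossedLeftAct.fst_apply_zero_eq_zero {M N : Type} [AddCommGroup M] [Module k M]
    [AddCommGroup N] [Module k N] {T : TwistedSystem k B H} {bim : BimodData k B M}
    {hact : H →ₗ[k] M →ₗ[k] M} {W : BicovBimod k H N}
    {L : (B ⊗[k] H) →ₗ[k] ((M ⊗[k] H) × (B ⊗[k] N)) →ₗ[k] ((M ⊗[k] H) × (B ⊗[k] N))}
    (hL : IsCrossedLeftAct k B H T bim hact W L) (x : B ⊗[k] H) (w : B ⊗[k] N) :
    (L x (0, w)).1 = 0 := by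
  induction x using TensorProduct.induction_on with
  | zero => rw [map_zero]; rfl
  | tmul b' h' =>
    induction w using TensorProduct.induction_on with
    | zero => rw [Prod.mk_zero_zero, map_zero]; rfl
    | tmul b γ =>
      obtain ⟨_, s, f₁, f₂, f₃, hh'⟩ := exists_rep3 (Δ₂ k H) h'
      obtain ⟨_, s', e₁, e₂, hγ⟩ := exists_rep2 W.lco γ
      rw [hL.2 b' h' b γ _ _ s s' f₁ f₂ f₃ e₁ e₂ hh' hγ]
    | add w₁ w₂ h₁ h₂ =>
      rw [← zero_add (0 : M ⊗[k] H), ← Prod.mk_add_mk, map_add, Prod.fst_add, h₁, h₂,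
        add_zero]
  | add x₁ x₂ h₁ h₂ => simp [h₁, h₂]

end CrossedProduct

theorem d_coc_eq_zero_of_leibniz
    (T : TwistedSystem k B H) (m : (B ⊗[k] H) →ₗ[k] (B ⊗[k] H) →ₗ[k] (B ⊗[k] H))
    (hm : IsCrossedMul k B H T m)
    (M N : Type) [AddCommGroup M] [Module k M] [AddCommGroup N] [Module k N]
    (F : FODCData k B M) (hact : H →ₗ[k] M →ₗ[k] M)
    -- `(Ω¹(H), d_H)` is a bicovariant FODC on `H`:
    (W : BicovFODC k H N)
    -- the crossed-product bimodule actions on `(Ω¹(B) ⊗ H) ⊕ (B ⊗ Ω¹(H))`: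
    (L : (B ⊗[k] H) →ₗ[k] ((M ⊗[k] H) × (B ⊗[k] N)) →ₗ[k] ((M ⊗[k] H) × (B ⊗[k] N)))
    (hL : IsCrossedLeftAct k B H T F.toBimodData hact W.toBicovBimod L)
    (Rt : ((M ⊗[k] H) × (B ⊗[k] N)) →ₗ[k] (B ⊗[k] H) →ₗ[k] ((M ⊗[k] H) × (B ⊗[k] N)))
    (hR : IsCrossedRightAct k B H T F.toBimodData W.toBicovBimod Rt)
    -- `d_#σ` satisfies the Leibniz rule:
    (h_leibniz : ∀ x y : B ⊗[k] H,
      (LinearMap.prod (TensorProduct.map F.d LinearMap.id)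
        (TensorProduct.map LinearMap.id W.d)) (m x y)
      = Rt ((LinearMap.prod (TensorProduct.map F.d LinearMap.id)
          (TensorProduct.map LinearMap.id W.d)) x) y
        + L x ((LinearMap.prod (TensorProduct.map F.d LinearMap.id)
          (TensorProduct.map LinearMap.id W.d)) y)) :
    ∀ h h' : H, F.d (T.coc h h') = 0 := by
  intro h h'
  have hd_one_tmul : ∀ g : H,
      (LinearMap.prod (TensorProduct.map F.d LinearMap.id)
        (TensorProduct.map LinearMap.id W.d)) (1 ⊗ₜ g) = (0, 1 ⊗ₜ W.d g) := by
    intro g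
    simp [F.d_one]
  have hfst : TensorProduct.map F.d LinearMap.id (m (1 ⊗ₜ h) (1 ⊗ₜ h')) = 0 := by
    have := congrArg Prod.fst (h_leibniz (1 ⊗ₜ h) (1 ⊗ₜ h'))
    rwa [hd_one_tmul, hd_one_tmul, Prod.fst_add, hR.fst_apply_zero_eq_zero,
      hL.fst_apply_zero_eq_zero, add_zero] at this
  calc F.d (T.coc h h')
      = TensorProduct.rid k M (LinearMap.lTensor M Coalgebra.counit
          (TensorProduct.map F.d LinearMap.id (m (1 ⊗ₜ h) (1 ⊗ₜ h')))) := by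
        rw [rid_lTensor_map, hm.rid_lTensor_counit_one_tmul_mul]
    _ = 0 := by rw [hfst, map_zero, map_zero]

end
end

section
/- In the noncommutative 2-torus A = C⟨u^{±1}, v^{±1}⟩/(vu − e^{iθ}uv), viewed as a cleft extension of B = span{(uv)^k : k ∈ ℤ} by H = C[t, t^{−1}] with cleaving map j(t^k) = u^k and j(t^{−k}) = v^k for k ≥ 0, the induced measure satisfies t^k·(uv)^l = e^{−iθkl}(uv)^l for all k, l ∈ ℤ, and the 2-cocycle satisfies σ(t^k⊗t^s) = 1 = σ(t^{−k}⊗t^{−s}) for k, s ≥ 0, σ(t⊗t^{−1}) = uv. -/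
/-!
Put `w = uv`. The relation `vu = e^{iθ} uv` says exactly that conjugation by `v` multiplies `w`
by `q = e^{iθ}` and conjugation by `u` multiplies it by `q⁻¹`; conjugation being multiplicative
and the scalars central, conjugating `w^l` by `u^k` (resp. `v^k`) multiplies it by `q^{-kl}`
(resp. `q^{kl}`), which is the measure formula. On each half-line of `ℤ` the cleaving map is a
power of a single unit and its inverse the matching power of the inverse unit, so the cocycle
values telescope to `1`.
-/

instance Units.smulCommClass_self {G M : Type*} [Group G] [Monoid M] [MulAction G M]
    [SMulCommClass G M M] [IsScalarTower G M M] : SMulCommClass G Mˣ Mˣ where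
  smul_comm g a b := Units.ext (mul_smul_comm g (a : M) b).symm

instance Units.isScalarTower_self {G M : Type*} [Group G] [Monoid M] [MulAction G M]
    [SMulCommClass G M M] [IsScalarTower G M M] : IsScalarTower G Mˣ Mˣ where
  smul_assoc g a b := Units.ext (smul_mul_assoc g (a : M) b)

theorem Units.val_pow_mul_val_inv_pow {M : Type*} [Monoid M] (a : Mˣ) (n : ℕ) :
    (a : M) ^ n * ((a⁻¹ : Mˣ) : M) ^ n = 1 := by
  rw [← Units.val_pow_eq_pow_val, ← Units.val_pow_eq_pow_val, inv_pow, Units.mul_inv]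

theorem conj_mul_eq_smul_of_mul_eq_smul {K G : Type*} [Group G] [SMul K G]
    [IsScalarTower K G G] {a b : G} {c : K} (h : b * a = c • (a * b)) :
    b * (a * b) * b⁻¹ = c • (a * b) := by
  rw [← mul_assoc b a b, h, smul_mul_assoc, smul_mul_assoc, mul_inv_cancel_right]

section ConjugationByScalar

variable {K G : Type*} [Group K] [Group G] [MulAction K G] [SMulCommClass K G G]
  [IsScalarTower K G G]

theorem conj_mul_eq_inv_smul_of_mul_eq_smul {a b : G} {c : K} (h : b * a = c • (a * b)) :
    a * (a * b) * a⁻¹ = c⁻¹ • (a * b) := by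
  have h' : a * b = c⁻¹ • (b * a) := eq_inv_smul_iff.mpr h.symm
  calc a * (a * b) * a⁻¹ = a * (c⁻¹ • (b * a)) * a⁻¹ := by rw [h']
    _ = c⁻¹ • (a * b) := by
      rw [mul_smul_comm, smul_mul_assoc, ← mul_assoc, mul_inv_cancel_right]

theorem conj_zpow_eq_smul_zpow {a x : G} {c : K} (h : a * x * a⁻¹ = c • x) (l : ℤ) :
    a * x ^ l * a⁻¹ = c ^ l • x ^ l := by
  rw [← conj_zpow, h, smul_zpow]

theorem pow_mul_mul_inv_pow_eq_smul {a x : G} {c : K} (h : a * x * a⁻¹ = c • x) (m : ℕ) :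
    a ^ m * x * a⁻¹ ^ m = c ^ m • x := by
  induction m with
  | zero => simp
  | succ m ih =>
    calc a ^ (m + 1) * x * a⁻¹ ^ (m + 1) = a * (a ^ m * x * a⁻¹ ^ m) * a⁻¹ := by
          rw [pow_succ' a, pow_succ a⁻¹]
          simp only [mul_assoc]
      _ = c ^ (m + 1) • x := by
          rw [ih, mul_smul_comm, smul_mul_assoc, h, pow_succ, mul_smul]

theorem pow_mul_zpow_mul_inv_pow_eq_smul {a x : G} {c : K} (h : a * x * a⁻¹ = c • x)
    (m : ℕ) (l : ℤ) : a ^ m * x ^ l * a⁻¹ ^ m = (c ^ l) ^ m • x ^ l :=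
  pow_mul_mul_inv_pow_eq_smul (conj_zpow_eq_smul_zpow h l) m

end ConjugationByScalar

theorem Units.val_pow_mul_val_zpow_mul_val_inv_pow {K M : Type*} [Group K] [Monoid M]
    [MulAction K M] [SMulCommClass K M M] [IsScalarTower K M M] {a x : Mˣ} {c : K}
    (h : a * x * a⁻¹ = c • x) (m : ℕ) (l : ℤ) :
    (a : M) ^ m * ((x ^ l : Mˣ) : M) * ((a⁻¹ : Mˣ) : M) ^ m
      = (c ^ l) ^ m • ((x ^ l : Mˣ) : M) := by
  simpa only [Units.val_mul, Units.val_pow_eq_pow_val, Units.val_smul]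
    using congrArg Units.val (pow_mul_zpow_mul_inv_pow_eq_smul h m l)

def signedPow {M : Type*} [Monoid M] (x y : M) (n : ℤ) : M :=
  if 0 ≤ n then x ^ n.toNat else y ^ (-n).toNat

section SignedPow

variable {M : Type*} [Monoid M] (x y : M) (n : ℕ)

@[simp]
theorem signedPow_natCast : signedPow x y n = x ^ n := by
  simp [signedPow]

@[simp]
theorem signedPow_neg_natCast : signedPow x y (-n) = y ^ n := by
  rcases n with _ | n
  · simp [signedPow]
  · rw [signedPow, if_neg (by omega)]
    simp

end SignedPow

theorem Complex.mk0_exp_zpow_pow (z : ℂ) (l : ℤ) (m : ℕ) :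
    (((Units.mk0 _ (Complex.exp_ne_zero z) ^ l) ^ m : ℂˣ) : ℂ) = Complex.exp (m * l * z) := by
  rw [mul_assoc, Complex.exp_nat_mul, Complex.exp_int_mul]
  simp

/-- In the noncommutative 2-torus `A` (generated by invertible `u`, `v`
with `vu = e^{iθ}uv`), viewed as a cleft extension of `B = span{(uv)^k}` by
`H = ℂ[t,t⁻¹]` with cleaving map `j(t^k) = u^k`, `j(t^{-k}) = v^k` (for `k ≥ 0`) and
convolution inverse `j⁻¹(t^k) = u^{-k}`, `j⁻¹(t^{-k}) = v^{-k}`, the induced measure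
`h·b = j(h₁) b j⁻¹(h₂)` satisfies `t^k·(uv)^l = e^{-iθkl}(uv)^l` for all `k, l ∈ ℤ`, and
the 2-cocycle `σ(h ⊗ h') = j(h₁)j(h'₁)j⁻¹(h₂h'₂)` satisfies
`σ(t^k ⊗ t^s) = 1 = σ(t^{-k} ⊗ t^{-s})` for `k, s ≥ 0` and `σ(t ⊗ t⁻¹) = uv`.
(Since every `tⁿ` is group-like, `j(h₁) b j⁻¹(h₂) = j(tⁿ) b j⁻¹(tⁿ)` and
`j(h₁)j(h'₁)j⁻¹(h₂h'₂) = j(tⁿ)j(tᵐ)j⁻¹(tⁿ⁺ᵐ)` on basis elements.) -/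
theorem noncommutative_torus_measure_and_cocycle
    (θ : ℝ) (A : Type) [Ring A] [Algebra ℂ A] (u v : Aˣ)
    (rel : ((v : A) * (u : A)) = Complex.exp (θ * Complex.I) • ((u : A) * (v : A)))
    -- the cleaving map and its convolution inverse, on the basis `tⁿ`, `n ∈ ℤ`:
    (j j' : ℤ → A)
    (hj : ∀ n : ℤ, j n = if 0 ≤ n then (u : A) ^ n.toNat else (v : A) ^ (-n).toNat)
    (hj' : ∀ n : ℤ, j' n = if 0 ≤ n then ((u⁻¹ : Aˣ) : A) ^ n.toNat
                            else ((v⁻¹ : Aˣ) : A) ^ (-n).toNat) :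
    -- the measure: `t^k · (uv)^l = e^{-iθkl} (uv)^l`
    (∀ k l : ℤ,
      j k * (((u * v) ^ l : Aˣ) : A) * j' k
        = Complex.exp (-((θ : ℂ) * (k : ℂ) * (l : ℂ)) * Complex.I)
            • (((u * v) ^ l : Aˣ) : A)) ∧
    -- the cocycle on nonnegative powers: `σ(t^k ⊗ t^s) = 1`
    (∀ k s : ℕ, j (k : ℤ) * j (s : ℤ) * j' ((k : ℤ) + (s : ℤ)) = 1) ∧
    -- and on nonpositive powers: `σ(t^{-k} ⊗ t^{-s}) = 1`
    (∀ k s : ℕ, j (-(k : ℤ)) * j (-(s : ℤ)) * j' (-((k : ℤ) + (s : ℤ))) = 1) ∧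
    -- and `σ(t ⊗ t⁻¹) = uv`:
    (j 1 * j (-1) * j' 0 = (u : A) * (v : A)) := by
  obtain rfl : j = signedPow (u : A) v := funext hj
  obtain rfl : j' = signedPow ((u⁻¹ : Aˣ) : A) ((v⁻¹ : Aˣ) : A) := funext hj'
  set Q : ℂˣ := Units.mk0 _ (Complex.exp_ne_zero (θ * Complex.I))
  have hvu : v * u = Q • (u * v) := Units.ext rel
  refine ⟨fun k l => ?_, fun k s => ?_, fun k s => ?_, ?_⟩
  · obtain ⟨m, rfl | rfl⟩ := k.eq_nat_or_neg
    · rw [signedPow_natCast, signedPow_natCast,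
        Units.val_pow_mul_val_zpow_mul_val_inv_pow (conj_mul_eq_inv_smul_of_mul_eq_smul hvu),
        Units.smul_def, inv_zpow', Complex.mk0_exp_zpow_pow]
      congr 2
      push_cast
      ring
    · rw [signedPow_neg_natCast, signedPow_neg_natCast,
        Units.val_pow_mul_val_zpow_mul_val_inv_pow (conj_mul_eq_smul_of_mul_eq_smul hvu),
        Units.smul_def, Complex.mk0_exp_zpow_pow]
      congr 2
      push_cast
      ring
  · rw [← Nat.cast_add, signedPow_natCast, signedPow_natCast, signedPow_natCast, ← pow_add,
      Units.val_pow_mul_val_inv_pow]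
  · rw [← Nat.cast_add, signedPow_neg_natCast, signedPow_neg_natCast, signedPow_neg_natCast,
      ← pow_add, Units.val_pow_mul_val_inv_pow]
  · simp [signedPow]
end

section
/- If an algebra A admits a nonzero FODC (Ω¹(A), d_A) such that Ω¹(A) is torsion-free as a left (or right) A-module, then A has no zero divisors. -/
noncomputable section

variable (k : Type) [Field k]

namespace BimodData

variable {k} {A M : Type} [Ring A] [Algebra k A] [AddCommGroup M] [Module k M] [Nontrivial M]

theorem noZeroDivisors_of_left_torsionFree (B : BimodData k A M)
    (htf : ∀ (a : A) (m : M), a ≠ 0 → B.l a m = 0 → m = 0) : NoZeroDivisors A where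
  eq_zero_or_eq_zero_of_mul_eq_zero {a b} hab := by
    by_contra! hne
    obtain ⟨m, hm⟩ := exists_ne (0 : M)
    have habm : B.l a (B.l b m) = 0 := by rw [← B.mul_l, hab, map_zero, LinearMap.zero_apply]
    exact hm (htf b m hne.2 (htf a _ hne.1 habm))

theorem noZeroDivisors_of_right_torsionFree (B : BimodData k A M)
    (htf : ∀ (a : A) (m : M), a ≠ 0 → B.r m a = 0 → m = 0) : NoZeroDivisors A where
  eq_zero_or_eq_zero_of_mul_eq_zero {a b} hab := by
    by_contra! hne
    obtain ⟨m, hm⟩ := exists_ne (0 : M)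
    have hmab : B.r (B.r m a) b = 0 := by rw [B.r_mul, hab, map_zero]
    exact hm (htf a m hne.1 (htf b _ hne.2 hmab))

end BimodData

/-- If an algebra `A` admits a nonzero FODC `(Ω¹(A), d_A)` such that
`Ω¹(A)` is torsion-free as a left (or right) `A`-module, then `A` has no zero divisors. -/
theorem no_zero_divisors_of_torsion_free_nonzero_fodc
    (A M : Type) [Ring A] [Algebra k A] [AddCommGroup M] [Module k M]
    (F : FODCData k A M)
    (h_nonzero : ∃ m : M, m ≠ 0)
    (h_tf : (∀ (a : A) (m : M), a ≠ 0 → F.l a m = 0 → m = 0) ∨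
            (∀ (a : A) (m : M), a ≠ 0 → F.r m a = 0 → m = 0)) :
    ∀ a b : A, a * b = 0 → a = 0 ∨ b = 0 := by
  obtain ⟨m, hm⟩ := h_nonzero
  have : Nontrivial M := ⟨⟨m, 0, hm⟩⟩
  have : NoZeroDivisors A := h_tf.elim F.noZeroDivisors_of_left_torsionFree
    F.noZeroDivisors_of_right_torsionFree
  exact fun a b => eq_zero_or_eq_zero_of_mul_eq_zero

end
end

section
/- For the crossed product calculus on B#_σH, the vertical map ver: Ω¹(B#_σH) → (B#_σH)⊗^{coH}Ω¹(H), given on β⊗h + b⊗γ by b⊗γ₋₂⊗S(γ₋₁)γ₀, is well-defined, left B#_σH-linear, and surjective with kernel equal to Ω¹(B)⊗H, yielding the short exact sequence 0 → Ω¹(B)⊗H → Ω¹(B#_σH) → (B#_σH)⊗^{coH}Ω¹(H) → 0 of left B#_σH-modules; hence the crossed product calculus is a quantum principal bundle. -/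
/-!
On `B ⊗ Ω¹(H)` the vertical map is `id_B ⊗ Φ` up to reassociation, where `Φ γ = γ₋₁ ⊗ P γ₀` and
`P γ = S(γ₋₁)γ₀`. In the left Hopf module `Ω¹(H)` the map `P` lands in the left coinvariants
(because the antipode is anti-comultiplicative), `P (hγ) = ε(h) P γ` and `γ₋₁ · P γ₀ = γ`; so `Φ`
is an isomorphism of left `H`-modules `Ω¹(H) ≅ H ⊗ ^{coH}Ω¹(H)` whose inverse is the action. This
gives the kernel and the image of `ver`. Left linearity comes from `Φ (hγ) = (h ⊗ 1) Φ γ` together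
with coassociativity of the coaction, which matches the factor `σ(h'₂ ⊗ γ₋₁)` of the left action
with the factor `σ(h'₂ ⊗ x₁)` of the crossed product multiplication.
-/

open TensorProduct

noncomputable section

variable (k B H : Type) [Field k] [Ring B] [Algebra k B] [Ring H]
  [HopfAlgebra k H]

universe u in
lemma TensorProduct.exists_sum_tmul_tmul {R : Type*} [CommSemiring R] {P Q S : Type u}
    [AddCommMonoid P] [Module R P] [AddCommMonoid Q] [Module R Q] [AddCommMonoid S] [Module R S]
    (x : P ⊗[R] (Q ⊗[R] S)) :
    ∃ (ι : Type u) (s : Finset ι) (f : ι → P) (g : ι → Q) (e : ι → S),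
      ∑ i ∈ s, f i ⊗ₜ[R] (g i ⊗ₜ[R] e i) = x := by
  classical
  obtain ⟨s, hs⟩ := TensorProduct.exists_finset x
  choose t ht using fun p : P × (Q ⊗[R] S) => TensorProduct.exists_finset (R := R) p.2
  refine ⟨Σ _ : P × (Q ⊗[R] S), Q × S, s.sigma t, fun i => i.1.1, fun i => i.2.1,
    fun i => i.2.2, ?_⟩
  rw [Finset.sum_sigma, hs]
  exact Finset.sum_congr rfl fun p _ => by rw [ht p, tmul_sum]

namespace Coalgebra

open scoped Coalgebra

variable {R A X : Type*} [CommSemiring R] [AddCommMonoid A] [Module R A] [Coalgebra R A]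
  [AddCommMonoid X] [Module R X]

lemma sum_counit_right_smul {ι : Type*} {a : A} (𝓡 : Repr R a ι) :
    ∑ i ∈ 𝓡.index, counit (R := R) (𝓡.right i) • 𝓡.left i = a := by
  simpa only [map_sum, _root_.TensorProduct.rid_tmul, one_smul] using
    congrArg (_root_.TensorProduct.rid R A) (sum_tmul_counit_eq 𝓡)

lemma sum_sum_apply_coassoc (f : A ⊗[R] (A ⊗[R] A) →ₗ[R] X) (a : A) :
    ∑ i ∈ (ℛ R a).index, ∑ j ∈ (ℛ R ((ℛ R a).left i)).index,
      f ((ℛ R ((ℛ R a).left i)).left j ⊗ₜ ((ℛ R ((ℛ R a).left i)).right j ⊗ₜ (ℛ R a).right i))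
    = ∑ i ∈ (ℛ R a).index, ∑ j ∈ (ℛ R ((ℛ R a).right i)).index,
      f ((ℛ R a).left i ⊗ₜ ((ℛ R ((ℛ R a).right i)).left j ⊗ₜ
        (ℛ R ((ℛ R a).right i)).right j)) := by
  simp only [← map_sum]
  rw [sum_tmul_tmul_eq (ℛ R a) (fun _ => ℛ R _) (fun _ => ℛ R _)]

end Coalgebra

namespace HopfAlgebra

open TensorProduct WithConv
open scoped Coalgebra

variable {R A : Type*} [CommSemiring R] [Semiring A] [HopfAlgebra R A]

lemma sum_antipode_tmul_mul_comul (x y : A) :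
    ∑ i ∈ (ℛ R x).index,
      (antipode R ((ℛ R x).left i) ⊗ₜ[R] y) * Coalgebra.comul (R := R) ((ℛ R x).right i)
      = 1 ⊗ₜ[R] (y * x) := by
  let Ψ : A ⊗[R] (A ⊗[R] A) →ₗ[R] A ⊗[R] A :=
    (LinearMap.mul' R A ∘ₗ (antipode R).rTensor A).rTensor A ∘ₗ
      (LinearMap.mulLeft R y).lTensor _ ∘ₗ (TensorProduct.assoc R A A A).symm.toLinearMap
  have hΨ (u v w : A) : Ψ (u ⊗ₜ (v ⊗ₜ w)) = (antipode R u * v) ⊗ₜ (y * w) := rfl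
  calc _ = ∑ i ∈ (ℛ R x).index, ∑ j ∈ (ℛ R ((ℛ R x).right i)).index,
        Ψ ((ℛ R x).left i ⊗ₜ ((ℛ R ((ℛ R x).right i)).left j ⊗ₜ
          (ℛ R ((ℛ R x).right i)).right j)) := by
        refine Finset.sum_congr rfl fun i _ => ?_
        rw [← (ℛ R _).eq, Finset.mul_sum]
        simp [hΨ]
    _ = _ := by
        rw [← Coalgebra.sum_sum_apply_coassoc]
        simp only [hΨ, ← sum_tmul, sum_antipode_mul_eq_smul, smul_tmul, ← mul_smul_comm,
          ← tmul_sum, ← Finset.mul_sum, Coalgebra.sum_counit_smul]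

lemma map_antipode_comm_comul_convMul_comul :
    toConv (map (antipode R) (antipode R) ∘ₗ (TensorProduct.comm R A A).toLinearMap ∘ₗ
      Coalgebra.comul) * toConv (Coalgebra.comul (R := R) (A := A)) = 1 := by
  let Φ : A ⊗[R] (A ⊗[R] A) →ₗ[R] A ⊗[R] A :=
    LinearMap.mul' R (A ⊗[R] A) ∘ₗ
      map (map (antipode R) (antipode R) ∘ₗ (TensorProduct.comm R A A).toLinearMap)
        Coalgebra.comul ∘ₗ
      (TensorProduct.assoc R A A A).symm.toLinearMap
  have hΦ (x y z : A) :
      Φ (x ⊗ₜ (y ⊗ₜ z)) = (antipode R y ⊗ₜ antipode R x) * Coalgebra.comul z := rfl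
  ext a
  calc _ = ∑ i ∈ (ℛ R a).index, ∑ j ∈ (ℛ R ((ℛ R a).left i)).index,
        Φ ((ℛ R ((ℛ R a).left i)).left j ⊗ₜ ((ℛ R ((ℛ R a).left i)).right j ⊗ₜ
          (ℛ R a).right i)) := by
        rw [(ℛ R a).convMul_apply]
        refine Finset.sum_congr rfl fun i _ => ?_
        simp [hΦ, ← (ℛ R ((ℛ R a).left i)).eq, Finset.sum_mul]
    _ = _ := by
        rw [Coalgebra.sum_sum_apply_coassoc]
        simp only [hΦ, sum_antipode_tmul_mul_comul, ← tmul_sum, sum_antipode_mul_eq_smul]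
        simp [Algebra.TensorProduct.one_def, Algebra.algebraMap_eq_smul_one]

-- Both sides are convolution inverses of `Δ`.
theorem comul_comp_antipode :
    Coalgebra.comul ∘ₗ antipode R = map (antipode R) (antipode R) ∘ₗ
      (TensorProduct.comm R A A).toLinearMap ∘ₗ Coalgebra.comul (R := R) (A := A) :=
  congrArg ofConv
    (left_inv_eq_right_inv map_antipode_comm_comul_convMul_comul LinearMap.comul_right_inv).symm

lemma sum_comul_antipode_mul_tmul_one (x : A) :
    ∑ i ∈ (ℛ R x).index,
      Coalgebra.comul (R := R) (antipode R ((ℛ R x).left i)) * ((ℛ R x).right i ⊗ₜ 1)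
      = 1 ⊗ₜ antipode R x := by
  let Φ : A ⊗[R] (A ⊗[R] A) →ₗ[R] A ⊗[R] A :=
    map (LinearMap.mul' R A ∘ₗ (antipode R).rTensor A) (antipode R) ∘ₗ
      (TensorProduct.comm R A (A ⊗[R] A)).toLinearMap
  have hΦ (a b c : A) : Φ (a ⊗ₜ (b ⊗ₜ c)) = (antipode R b * c) ⊗ₜ antipode R a := rfl
  calc _ = ∑ i ∈ (ℛ R x).index, ∑ j ∈ (ℛ R ((ℛ R x).left i)).index,
        Φ ((ℛ R ((ℛ R x).left i)).left j ⊗ₜ ((ℛ R ((ℛ R x).left i)).right j ⊗ₜ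
          (ℛ R x).right i)) := by
        refine Finset.sum_congr rfl fun i _ => ?_
        rw [← LinearMap.comp_apply, comul_comp_antipode, LinearMap.comp_apply,
          LinearMap.comp_apply, ← (ℛ R _).eq]
        simp [hΦ, Finset.sum_mul]
    _ = _ := by
        rw [Coalgebra.sum_sum_apply_coassoc]
        simp only [hΦ, ← sum_tmul, sum_antipode_mul_eq_smul, smul_tmul, ← tmul_sum, ← map_smul,
          ← map_sum, Coalgebra.sum_counit_right_smul]

end HopfAlgebra

namespace BicovBimod

open TensorProduct HopfAlgebra
open scoped Coalgebra

variable {k H} {N : Type} [AddCommGroup N] [Module k N] (W : BicovBimod k H N)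

def diagAct : H ⊗[k] H →ₗ[k] H ⊗[k] N →ₗ[k] H ⊗[k] N :=
  lift ((mapBilinear (RingHom.id k) H N H N).compl₁₂ (LinearMap.mul k H) W.l)

@[simp]
lemma diagAct_tmul (a b : H) : W.diagAct (a ⊗ₜ b) = map (LinearMap.mulLeft k a) (W.l b) := rfl

lemma lco_l (h : H) (n : N) :
    W.lco (W.l h n) = W.diagAct (Coalgebra.comul (R := k) h) (W.lco n) := by
  have key : ∀ (w : H ⊗[k] H) (z : H ⊗[k] N), map (LinearMap.mul' k H) (lift W.l)
      (tensorTensorTensorComm k H H H N (w ⊗ₜ z)) = W.diagAct w z := by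
    intro w z
    induction w using TensorProduct.induction_on with
    | zero => simp
    | add w w' hw hw' => simp [add_tmul, hw, hw']
    | tmul a b =>
      induction z using TensorProduct.induction_on with
      | zero => simp
      | add z z' hz hz' => simp [tmul_add, hz, hz']
      | tmul x m => simp
  simpa using (LinearMap.congr_fun W.lco_lact (h ⊗ₜ n)).trans (key _ _)

lemma diagAct_mul_tmul_one (w : H ⊗[k] H) (y : H) (m : N) :
    W.diagAct (w * (y ⊗ₜ 1)) (1 ⊗ₜ m) = W.diagAct w (y ⊗ₜ m) := by
  induction w using TensorProduct.induction_on with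
  | zero => simp
  | add w w' hw hw' => simp [add_mul, hw, hw']
  | tmul a b => simp

lemma lTensor_lco_comp_lco :
    W.lco.lTensor H ∘ₗ W.lco =
      (TensorProduct.assoc k H H N).toLinearMap ∘ₗ (Coalgebra.comul (R := k)).rTensor N ∘ₗ
        W.lco :=
  LinearMap.ext fun n => (W.lco_coassoc n).symm

def antipodeAct : H ⊗[k] N →ₗ[k] N := lift W.l ∘ₗ map (antipode k) LinearMap.id

@[simp]
lemma antipodeAct_tmul (x : H) (m : N) : W.antipodeAct (x ⊗ₜ m) = W.l (antipode k x) m := rfl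

def coinvProj : N →ₗ[k] N := W.antipodeAct ∘ₗ W.lco

lemma antipodeAct_comp_diagAct_comul (h : H) :
    W.antipodeAct ∘ₗ W.diagAct (Coalgebra.comul (R := k) h) =
      Coalgebra.counit (R := k) h • W.antipodeAct := by
  refine TensorProduct.ext' fun x m => ?_
  rw [← (ℛ k h).eq]
  have hS (a b : H) : W.l (antipode k (a * x)) (W.l b m) =
      W.l (antipode k x) (W.l (antipode k a * b) m) := by
    rw [antipode_mul_antidistrib, W.mul_l, W.mul_l]
  simp only [map_sum, LinearMap.sum_apply, LinearMap.smul_apply, LinearMap.comp_apply,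
    diagAct_tmul, map_tmul, LinearMap.mulLeft_apply, antipodeAct_tmul, hS]
  rw [← map_sum, ← LinearMap.sum_apply, ← map_sum, sum_antipode_mul_eq_smul]
  simp [W.one_l]

lemma coinvProj_l (h : H) (n : N) :
    W.coinvProj (W.l h n) = Coalgebra.counit (R := k) h • W.coinvProj n := by
  simp only [coinvProj, LinearMap.comp_apply, lco_l]
  rw [← LinearMap.comp_apply, antipodeAct_comp_diagAct_comul, LinearMap.smul_apply]

lemma lco_coinvProj (n : N) : W.lco (W.coinvProj n) = 1 ⊗ₜ W.coinvProj n := by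
  let Y : H ⊗[k] (H ⊗[k] N) →ₗ[k] H ⊗[k] N :=
    lift (W.diagAct ∘ₗ Coalgebra.comul ∘ₗ antipode k)
  have hY : W.lco ∘ₗ W.antipodeAct = Y ∘ₗ W.lco.lTensor H :=
    TensorProduct.ext' fun x m => by simp [Y, lco_l]
  have hY' : Y ∘ₗ (TensorProduct.assoc k H H N).toLinearMap ∘ₗ
      (Coalgebra.comul (R := k)).rTensor N = TensorProduct.mk k H N 1 ∘ₗ W.antipodeAct := by
    refine TensorProduct.ext' fun x m => ?_
    simp only [LinearMap.comp_apply, LinearMap.rTensor_tmul, LinearEquiv.coe_coe]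
    rw [← (ℛ k x).eq, sum_tmul, map_sum]
    simp only [map_sum, assoc_tmul, Y, lift.tmul, LinearMap.comp_apply]
    rw [Finset.sum_congr rfl fun i _ => (W.diagAct_mul_tmul_one _ _ m).symm,
      ← LinearMap.sum_apply, ← map_sum, sum_comul_antipode_mul_tmul_one]
    simp only [diagAct_tmul, TensorProduct.map_tmul, LinearMap.mulLeft_apply, mul_one,
      antipodeAct_tmul, TensorProduct.mk_apply]
  calc W.lco (W.coinvProj n) = (W.lco ∘ₗ W.antipodeAct) (W.lco n) := rfl
    _ = Y (W.lco.lTensor H (W.lco n)) := by rw [hY]; rfl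
    _ = (Y ∘ₗ (TensorProduct.assoc k H H N).toLinearMap ∘ₗ
          (Coalgebra.comul (R := k)).rTensor N) (W.lco n) := by
        rw [← LinearMap.comp_apply (W.lco.lTensor H), lTensor_lco_comp_lco]
        rfl
    _ = _ := by rw [hY']; rfl

def coinvariants : Submodule k N := LinearMap.ker (W.lco - TensorProduct.mk k H N 1)

lemma mem_coinvariants {γ : N} : γ ∈ W.coinvariants ↔ W.lco γ = 1 ⊗ₜ γ := by
  simp [coinvariants, sub_eq_zero]

lemma coinvProj_mem_coinvariants (n : N) : W.coinvProj n ∈ W.coinvariants :=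
  (W.mem_coinvariants).2 (W.lco_coinvProj n)

lemma coinvProj_of_lco_eq {γ : N} (hγ : W.lco γ = 1 ⊗ₜ γ) : W.coinvProj γ = γ := by
  simp [coinvProj, hγ, antipode_one, W.one_l]

-- `Φ γ = γ₋₁ ⊗ S(γ₀₋₁)γ₀₀`, inverse to the action `H ⊗ ^{coH}N → N`.
def coinvDecomp : N →ₗ[k] H ⊗[k] N := W.coinvProj.lTensor H ∘ₗ W.lco

lemma coinvDecomp_l (h : H) (n : N) :
    W.coinvDecomp (W.l h n) = (LinearMap.mulLeft k h).rTensor N (W.coinvDecomp n) := by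
  have key : W.coinvProj.lTensor H ∘ₗ W.diagAct (Coalgebra.comul (R := k) h) =
      (LinearMap.mulLeft k h).rTensor N ∘ₗ W.coinvProj.lTensor H := by
    refine TensorProduct.ext' fun y m => ?_
    conv_rhs => rw [← Coalgebra.sum_counit_right_smul (ℛ k h)]
    rw [← (ℛ k h).eq]
    simp [map_sum, coinvProj_l, Finset.sum_mul, sum_tmul, smul_tmul]
  simp only [coinvDecomp, LinearMap.comp_apply, lco_l]
  rw [← LinearMap.comp_apply, key, LinearMap.comp_apply]

lemma coinvDecomp_l_of_lco_eq (h : H) {γ : N} (hγ : W.lco γ = 1 ⊗ₜ γ) :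
    W.coinvDecomp (W.l h γ) = h ⊗ₜ γ := by
  rw [coinvDecomp_l]
  simp [coinvDecomp, hγ, coinvProj_of_lco_eq W hγ]

lemma lift_l_coinvDecomp (n : N) : lift W.l (W.coinvDecomp n) = n := by
  have key : lift W.l ∘ₗ W.antipodeAct.lTensor H ∘ₗ (TensorProduct.assoc k H H N).toLinearMap ∘ₗ
      (Coalgebra.comul (R := k)).rTensor N =
      (TensorProduct.lid k N).toLinearMap ∘ₗ (Coalgebra.counit (R := k)).rTensor N := by
    refine TensorProduct.ext' fun x m => ?_
    simp only [LinearMap.comp_apply, LinearMap.rTensor_tmul, LinearEquiv.coe_coe]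
    rw [← (ℛ k x).eq]
    simp only [sum_tmul, map_sum, assoc_tmul, LinearMap.lTensor_tmul, antipodeAct_tmul,
      lift.tmul, ← W.mul_l]
    rw [← LinearMap.sum_apply, ← map_sum, sum_mul_antipode_eq_smul]
    simp [W.one_l]
  calc lift W.l (W.coinvDecomp n)
      = (lift W.l ∘ₗ W.antipodeAct.lTensor H) (W.lco.lTensor H (W.lco n)) := by
        simp [coinvDecomp, coinvProj, LinearMap.lTensor_comp]
    _ = _ := by
        rw [← LinearMap.comp_apply (W.lco.lTensor H), lTensor_lco_comp_lco]
        exact (LinearMap.congr_fun key (W.lco n)).trans (W.lco_counit n)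

lemma coinvDecomp_eq_lTensor_antipodeAct_comp_Λ₂ :
    W.coinvDecomp = W.antipodeAct.lTensor H ∘ₗ Λ₂ k H W := by
  rw [coinvDecomp, coinvProj, LinearMap.lTensor_comp, LinearMap.comp_assoc, lTensor_lco_comp_lco]
  rfl

lemma lTensor_coinvDecomp_comp_lco :
    W.coinvDecomp.lTensor H ∘ₗ W.lco = (TensorProduct.assoc k H H N).toLinearMap ∘ₗ
      (Coalgebra.comul (R := k)).rTensor N ∘ₗ W.coinvDecomp := by
  have key : (W.coinvProj.lTensor H).lTensor H ∘ₗ (TensorProduct.assoc k H H N).toLinearMap ∘ₗ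
      (Coalgebra.comul (R := k)).rTensor N = (TensorProduct.assoc k H H N).toLinearMap ∘ₗ
      (Coalgebra.comul (R := k)).rTensor N ∘ₗ W.coinvProj.lTensor H := by
    refine TensorProduct.ext' fun x m => ?_
    simp only [LinearMap.comp_apply, LinearMap.rTensor_tmul, LinearMap.lTensor_tmul]
    rw [← (ℛ k x).eq]
    simp [sum_tmul]
  rw [coinvDecomp, LinearMap.lTensor_comp, LinearMap.comp_assoc, lTensor_lco_comp_lco]
  exact LinearMap.ext fun n => LinearMap.congr_fun key (W.lco n)

variable (E : Type) [AddCommGroup E] [Module k E]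

def verticalMap : E ⊗[k] N →ₗ[k] (E ⊗[k] H) ⊗[k] N :=
  (TensorProduct.assoc k E H N).symm.toLinearMap ∘ₗ W.coinvDecomp.lTensor E

def verticalRetract : (E ⊗[k] H) ⊗[k] N →ₗ[k] E ⊗[k] N :=
  (lift W.l).lTensor E ∘ₗ (TensorProduct.assoc k E H N).toLinearMap

lemma verticalRetract_verticalMap (y : E ⊗[k] N) :
    W.verticalRetract E (W.verticalMap E y) = y := by
  have h : lift W.l ∘ₗ W.coinvDecomp = LinearMap.id := LinearMap.ext W.lift_l_coinvDecomp
  simp only [verticalRetract, verticalMap, LinearMap.comp_apply, LinearEquiv.coe_coe,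
    LinearEquiv.apply_symm_apply, ← LinearMap.lTensor_comp_apply, h, LinearMap.lTensor_id,
    LinearMap.id_apply]

lemma verticalMap_injective : Function.Injective (W.verticalMap E) :=
  Function.LeftInverse.injective (W.verticalRetract_verticalMap E)

lemma verticalMap_mem_range (y : E ⊗[k] N) :
    W.verticalMap E y ∈ LinearMap.range (LinearMap.lTensor (E ⊗[k] H) W.coinvariants.subtype) := by
  induction y using TensorProduct.induction_on with
  | zero => simp
  | add y y' hy hy' => rw [map_add]; exact Submodule.add_mem _ hy hy'
  | tmul e γ =>
    simp only [verticalMap, LinearMap.comp_apply, LinearMap.lTensor_tmul, coinvDecomp]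
    induction W.lco γ using TensorProduct.induction_on with
    | zero => simp
    | add z z' hz hz' =>
      rw [map_add, tmul_add, map_add]
      exact Submodule.add_mem _ hz hz'
    | tmul x m =>
      exact ⟨(e ⊗ₜ x) ⊗ₜ ⟨_, W.coinvProj_mem_coinvariants m⟩, by simp⟩

lemma verticalMap_verticalRetract_of_mem {w : (E ⊗[k] H) ⊗[k] N}
    (hw : w ∈ LinearMap.range (LinearMap.lTensor (E ⊗[k] H) W.coinvariants.subtype)) :
    W.verticalMap E (W.verticalRetract E w) = w := by
  obtain ⟨z, rfl⟩ := hw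
  rw [← LinearMap.comp_apply, ← LinearMap.comp_apply]
  congr 1
  refine TensorProduct.ext_threefold fun e h γ => ?_
  simp [verticalRetract, verticalMap, coinvDecomp_l_of_lco_eq W h ((W.mem_coinvariants).1 γ.2)]

lemma rTensor_verticalMap_tmul {X : Type} [AddCommGroup X] [Module k X]
    (g : E ⊗[k] H →ₗ[k] X) (e : E) (γ : N) :
    g.rTensor N (W.verticalMap E (e ⊗ₜ γ)) =
      (g ∘ₗ TensorProduct.mk k E H e).rTensor N (W.coinvDecomp γ) := by
  simp only [verticalMap, LinearMap.comp_apply, LinearMap.lTensor_tmul, LinearEquiv.coe_coe]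
  induction W.coinvDecomp γ using TensorProduct.induction_on with
  | zero => simp
  | add z z' hz hz' => simp [tmul_add, hz, hz']
  | tmul y n => simp

lemma verticalMap_map_l_lco (β : H →ₗ[k] E) (c : H) (γ : N) :
    W.verticalMap E (map β (W.l c) (W.lco γ)) =
      (map β (LinearMap.mulLeft k c) ∘ₗ Coalgebra.comul (R := k)).rTensor N (W.coinvDecomp γ) := by
  have hl : W.coinvDecomp ∘ₗ W.l c = (LinearMap.mulLeft k c).rTensor N ∘ₗ W.coinvDecomp :=
    LinearMap.ext (W.coinvDecomp_l c)
  have hmap : W.coinvDecomp.lTensor E ∘ₗ map β (W.l c) =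
      map β ((LinearMap.mulLeft k c).rTensor N) ∘ₗ W.coinvDecomp.lTensor H := by
    rw [LinearMap.lTensor_comp_map, hl, LinearMap.map_comp_lTensor]
  have hassoc :=
    TensorProduct.map_map_comp_assoc_eq β (LinearMap.mulLeft k c) (LinearMap.id (R := k) (M := N))
  calc W.verticalMap E (map β (W.l c) (W.lco γ))
      = (TensorProduct.assoc k E H N).symm
          (map β ((LinearMap.mulLeft k c).rTensor N) (W.coinvDecomp.lTensor H (W.lco γ))) := by
        simp only [verticalMap, LinearMap.comp_apply, LinearEquiv.coe_coe]
        rw [← LinearMap.comp_apply (W.coinvDecomp.lTensor E), hmap]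
        rfl
    _ = _ := by
        rw [← LinearMap.comp_apply (W.coinvDecomp.lTensor H), lTensor_coinvDecomp_comp_lco]
        simp only [LinearMap.comp_apply, LinearEquiv.coe_coe]
        have key := LinearMap.congr_fun hassoc
          ((Coalgebra.comul (R := k)).rTensor N (W.coinvDecomp γ))
        simp only [LinearMap.comp_apply, LinearEquiv.coe_coe] at key
        rw [LinearMap.rTensor, key, LinearEquiv.symm_apply_apply, LinearMap.rTensor_comp_apply]
        rfl

end BicovBimod

section CrossedProduct

open TensorProduct HopfAlgebra
open scoped Coalgebra

variable {k B H} {M N : Type} [AddCommGroup M] [Module k M] [AddCommGroup N] [Module k N]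

lemma eq_verticalMap_comp_snd {E : Type} [AddCommGroup E] [Module k E] (W : BicovBimod k H N)
    (ver : ((M ⊗[k] H) × (E ⊗[k] N)) →ₗ[k] (E ⊗[k] H) ⊗[k] N)
    (hver₁ : ∀ (β : M) (h : H), ver (β ⊗ₜ[k] h, 0) = 0)
    (hver₂ : ∀ (b : E) (γ : N) (ι : Type) (s : Finset ι) (e₁ e₂ : ι → H) (e₃ : ι → N),
      Rep3 k (Λ₂ k H W) s e₁ e₂ e₃ γ →
        ver (0, b ⊗ₜ[k] γ) = ∑ i ∈ s, (b ⊗ₜ[k] e₁ i) ⊗ₜ[k] (W.l (antipode k (e₂ i)) (e₃ i))) :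
    ver = W.verticalMap E ∘ₗ LinearMap.snd k _ _ := by
  refine LinearMap.prod_ext (TensorProduct.ext' fun β h => by simpa using hver₁ β h)
    (TensorProduct.ext' fun b γ => ?_)
  obtain ⟨ι, s, e₁, e₂, e₃, hs⟩ := TensorProduct.exists_sum_tmul_tmul (Λ₂ k H W γ)
  rw [LinearMap.comp_apply, LinearMap.inr_apply, hver₂ b γ ι s e₁ e₂ e₃ hs]
  simp [BicovBimod.verticalMap, BicovBimod.coinvDecomp_eq_lTensor_antipodeAct_comp_Λ₂, ← hs,
    tmul_sum]

variable {T : TwistedSystem k B H} {bim : BimodData k B M} {hact : H →ₗ[k] M →ₗ[k] M}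
  {W : BicovBimod k H N}
  {L : (B ⊗[k] H) →ₗ[k] ((M ⊗[k] H) × (B ⊗[k] N)) →ₗ[k] ((M ⊗[k] H) × (B ⊗[k] N))}

lemma snd_crossedLeftAct_inl (hL : IsCrossedLeftAct k B H T bim hact W L) (x : B ⊗[k] H)
    (z : M ⊗[k] H) : (L x (z, 0)).2 = 0 := by
  suffices (L.compl₂ (LinearMap.inl k _ _)).compr₂ (LinearMap.snd k _ _) = 0 from
    LinearMap.congr_fun₂ this x z
  refine TensorProduct.ext' fun b' h' => TensorProduct.ext' fun β h => ?_
  obtain ⟨ι, s, f₁, f₂, f₃, hs⟩ := TensorProduct.exists_sum_tmul_tmul (Δ₂ k H h')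
  simp [hL.1 b' h' β h ι (H × H) s (ℛ k h).index f₁ f₂ f₃ (ℛ k h).left (ℛ k h).right hs
    (ℛ k h).eq]

lemma verticalMap_crossedLeftAct_tmul {m : (B ⊗[k] H) →ₗ[k] (B ⊗[k] H) →ₗ[k] (B ⊗[k] H)}
    (hm : IsCrossedMul k B H T m) (hL : IsCrossedLeftAct k B H T bim hact W L)
    (b' : B) (h' : H) (b : B) (γ : N) :
    W.verticalMap B (L (b' ⊗ₜ h') (0, b ⊗ₜ γ)).2 =
      (m (b' ⊗ₜ h')).rTensor N (W.verticalMap B (b ⊗ₜ γ)) := by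
  obtain ⟨ι, s, f₁, f₂, f₃, hs⟩ := TensorProduct.exists_sum_tmul_tmul (Δ₂ k H h')
  obtain ⟨t, ht⟩ := TensorProduct.exists_finset (W.lco γ)
  let β : ι → H →ₗ[k] B := fun i => LinearMap.mulLeft k (b' * T.act (f₁ i) b) ∘ₗ T.coc (f₂ i)
  have hmb : m (b' ⊗ₜ h') ∘ₗ TensorProduct.mk k B H b =
      ∑ i ∈ s, map (β i) (LinearMap.mulLeft k (f₃ i)) ∘ₗ Coalgebra.comul (R := k) := by
    refine LinearMap.ext fun y => ?_
    rw [LinearMap.comp_apply, TensorProduct.mk_apply,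
      hm ι (H × H) s (ℛ k y).index f₁ f₂ f₃ (ℛ k y).left (ℛ k y).right h' y hs (ℛ k y).eq]
    simp [β, ← (ℛ k y).eq, map_sum, mul_assoc]
  rw [hL.2 b' h' b γ ι (H × N) s t f₁ f₂ f₃ Prod.fst Prod.snd hs ht.symm,
    BicovBimod.rTensor_verticalMap_tmul, hmb]
  calc W.verticalMap B (∑ i ∈ s, ∑ j ∈ t,
        (b' * T.act (f₁ i) b * T.coc (f₂ i) j.1) ⊗ₜ W.l (f₃ i) j.2)
      = ∑ i ∈ s, W.verticalMap B (map (β i) (W.l (f₃ i)) (W.lco γ)) := by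
        simp [ht, map_sum, β, mul_assoc]
    _ = _ := by
        simp only [BicovBimod.verticalMap_map_l_lco, ← LinearMap.coe_rTensorHom, map_sum,
          LinearMap.sum_apply]

lemma verticalMap_snd_crossedLeftAct {m : (B ⊗[k] H) →ₗ[k] (B ⊗[k] H) →ₗ[k] (B ⊗[k] H)}
    (hm : IsCrossedMul k B H T m) (hL : IsCrossedLeftAct k B H T bim hact W L) (x : B ⊗[k] H)
    (c : (M ⊗[k] H) × (B ⊗[k] N)) :
    W.verticalMap B (L x c).2 = (m x).rTensor N (W.verticalMap B c.2) := by
  have hinr : (L.compl₂ (LinearMap.inr k _ _)).compr₂ (W.verticalMap B ∘ₗ LinearMap.snd k _ _) =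
      (LinearMap.rTensorHom N ∘ₗ m).compl₂ (W.verticalMap B) :=
    TensorProduct.ext' fun b' h' => TensorProduct.ext' fun b γ =>
      verticalMap_crossedLeftAct_tmul hm hL b' h' b γ
  calc W.verticalMap B (L x c).2 = W.verticalMap B (L x (0, c.2)).2 := by
        conv_lhs => rw [← Prod.fst_add_snd c, map_add, Prod.snd_add, snd_crossedLeftAct_inl hL,
          zero_add]
    _ = _ := LinearMap.congr_fun₂ hinr x c.2

end CrossedProduct

theorem crossed_product_vertical_map_exact
    (T : TwistedSystem k B H) (m : (B ⊗[k] H) →ₗ[k] (B ⊗[k] H) →ₗ[k] (B ⊗[k] H))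
    (hm : IsCrossedMul k B H T m)
    (M N : Type) [AddCommGroup M] [Module k M] [AddCommGroup N] [Module k N]
    (F : FODCData k B M) (hact : H →ₗ[k] M →ₗ[k] M)
    (W : BicovFODC k H N)
    (L : (B ⊗[k] H) →ₗ[k] ((M ⊗[k] H) × (B ⊗[k] N)) →ₗ[k] ((M ⊗[k] H) × (B ⊗[k] N)))
    (hL : IsCrossedLeftAct k B H T F.toBimodData hact W.toBicovBimod L)
    -- the vertical map:
    (ver : ((M ⊗[k] H) × (B ⊗[k] N)) →ₗ[k] (B ⊗[k] H) ⊗[k] N)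
    (hver₁ : ∀ (β : M) (h : H), ver (β ⊗ₜ[k] h, 0) = 0)
    (hver₂ : ∀ (b : B) (γ : N) (ι : Type) (s : Finset ι)
        (e₁ e₂ : ι → H) (e₃ : ι → N),
      Rep3 k (Λ₂ k H W.toBicovBimod) s e₁ e₂ e₃ γ →
        ver (0, b ⊗ₜ[k] γ) = ∑ i ∈ s,
          (b ⊗ₜ[k] e₁ i) ⊗ₜ[k] (W.l (HopfAlgebra.antipode (R := k) (e₂ i)) (e₃ i))) :
    -- `ver` is left `B#_σH`-linear, …
    (∀ (x : B ⊗[k] H) (c : (M ⊗[k] H) × (B ⊗[k] N)) (ι : Type) (s : Finset ι)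
        (w : ι → B ⊗[k] H) (n : ι → N),
      Rep2 k ver s w n c → ver (L x c) = ∑ i ∈ s, (m x (w i)) ⊗ₜ[k] n i) ∧
    -- … takes values in `(B#_σH) ⊗ ^{coH}Ω¹(H)`, …
    (∀ c : (M ⊗[k] H) × (B ⊗[k] N),
      ver c ∈ LinearMap.range (TensorProduct.map (LinearMap.id (R := k) (M := B ⊗[k] H))
        (LinearMap.ker (W.lco - (TensorProduct.mk k H N) 1)).subtype)) ∧
    -- … its kernel is exactly the horizontal forms `Ω¹(B) ⊗ H`, …
    (∀ c : (M ⊗[k] H) × (B ⊗[k] N), ver c = 0 ↔ c.2 = 0) ∧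
    -- … and it is surjective onto `(B#_σH) ⊗ ^{coH}Ω¹(H)`:
    (∀ w : (B ⊗[k] H) ⊗[k] N,
      w ∈ LinearMap.range (TensorProduct.map (LinearMap.id (R := k) (M := B ⊗[k] H))
        (LinearMap.ker (W.lco - (TensorProduct.mk k H N) 1)).subtype) →
      ∃ c : (M ⊗[k] H) × (B ⊗[k] N), ver c = w) := by
  have hver (c : (M ⊗[k] H) × (B ⊗[k] N)) : ver c = W.verticalMap B c.2 := by
    rw [eq_verticalMap_comp_snd W.toBicovBimod ver hver₁ hver₂]
    rfl
  refine ⟨fun x c ι s w n hrep => ?_, fun c => ?_, fun c => ?_, fun w hw => ?_⟩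
  · rw [hver, verticalMap_snd_crossedLeftAct hm hL, ← hver, ← hrep, map_sum]
    simp only [LinearMap.rTensor_tmul]
  · rw [hver]
    exact W.verticalMap_mem_range B c.2
  · rw [hver, ← map_zero (W.verticalMap B), (W.verticalMap_injective B).eq_iff]
  · exact ⟨(0, W.verticalRetract B w), (hver _).trans (W.verticalMap_verticalRetract_of_mem B hw)⟩

end
end

section
/- Let V be a right H-comodule and E := ((B#_σH)⊗V)^{coH} the associated bundle with B-bimodule structure induced by multiplication in B#_σH. Then ∇_E: E → Ω¹(B)⊗_B E, b⊗h⊗v ↦ d_B b⊗h⊗v, is a covariant derivative, and it is a bimodule covariant derivative with σ_E: E⊗_B Ω¹(B) → Ω¹(B)⊗_B E given by σ_E(b⊗h⊗v⊗_B β) = b(h₁·β)⊗h₂⊗v; i.e. σ_E is a B-bimodule map and ∇_E(e·b') = σ_E(e⊗_B d_B b') + (∇_E e)·b'. -/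
open TensorProduct

noncomputable section

variable (k B H : Type) [Field k] [Ring B] [Algebra k B] [Ring H]
  [HopfAlgebra k H]

/-!
Every Sweedler-type identity in the proof is an identity between convolutions
`c ↦ ∑ μ (f c₁) (g c₂)` of linear maps out of `H` with respect to bilinear pairings `μ`;
coassociativity of `H` becomes associativity of these convolutions.

The one substantial point is that the `H`-action on `Ω¹(B)` is compatible with the right
`B`-action, `h·(β b) = (h₁·β)(h₂·b)`. For a generator `β = a dc` write `β b = a d(cb) - ac db`
and expand both terms with the compatibility of the action with `d` and with the left
`B`-action; the `ac db` terms cancel. Given this, `σ_E` is right `B`-linear because moving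
`h₁·b` across `⊗_B` turns `σ_E(e ⊗ β b)` into `σ_E(e ⊗ β)·b`, and the two Leibniz rules are
checked on elementary tensors `b ⊗ h ⊗ v` using the Leibniz rule of `d_B`.
-/

section Convolution

open Coalgebra

variable {R C X Y Z W U V : Type*} [CommSemiring R] [AddCommMonoid C] [Module R C] [Coalgebra R C]
  [AddCommMonoid X] [Module R X] [AddCommMonoid Y] [Module R Y] [AddCommMonoid Z] [Module R Z]
  [AddCommMonoid W] [Module R W] [AddCommMonoid U] [Module R U] [AddCommMonoid V] [Module R V]

/-- The convolution `c ↦ ∑ μ (f c₁) (g c₂)` of two linear maps out of a coalgebra with respect to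
a bilinear pairing `μ`. -/
def bilinConv (μ : X →ₗ[R] Y →ₗ[R] Z) (f : C →ₗ[R] X) (g : C →ₗ[R] Y) : C →ₗ[R] Z :=
  lift μ ∘ₗ map f g ∘ₗ comul

theorem Coalgebra.Repr.bilinConv_apply {ι : Type*} {c : C} (𝓡 : Repr R c ι) (μ : X →ₗ[R] Y →ₗ[R] Z)
    (f : C →ₗ[R] X) (g : C →ₗ[R] Y) :
    bilinConv μ f g c = ∑ i ∈ 𝓡.index, μ (f (𝓡.left i)) (g (𝓡.right i)) := by
  simp [bilinConv, ← 𝓡.eq]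

theorem comp_bilinConv (L : Z →ₗ[R] W) (μ : X →ₗ[R] Y →ₗ[R] Z) (f : C →ₗ[R] X)
    (g : C →ₗ[R] Y) : L ∘ₗ bilinConv μ f g = bilinConv (μ.compr₂ L) f g := by
  simp only [bilinConv, TensorProduct.lift_compr₂, LinearMap.comp_assoc]

theorem bilinConv_compl₁₂ (μ : X →ₗ[R] Y →ₗ[R] Z) (f : C →ₗ[R] W) (g : C →ₗ[R] U)
    (p : W →ₗ[R] X) (q : U →ₗ[R] Y) :
    bilinConv (μ.compl₁₂ p q) f g = bilinConv μ (p ∘ₗ f) (q ∘ₗ g) := by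
  have hlift : lift (μ.compl₁₂ p q) = lift μ ∘ₗ map p q :=
    TensorProduct.ext' fun _ _ => rfl
  simp only [bilinConv, hlift, LinearMap.comp_assoc,
    ← LinearMap.comp_assoc _ _ (map p q), ← TensorProduct.map_comp]

theorem bilinConv_add (μ μ' : X →ₗ[R] Y →ₗ[R] Z) (f : C →ₗ[R] X) (g : C →ₗ[R] Y) :
    bilinConv (μ + μ') f g = bilinConv μ f g + bilinConv μ' f g := by
  have hlift : lift (μ + μ') = lift μ + lift μ' :=
    TensorProduct.ext' fun x y => by simp
  simp only [bilinConv, hlift, LinearMap.add_comp]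

theorem bilinConv_add_left (μ : X →ₗ[R] Y →ₗ[R] Z) (f f' : C →ₗ[R] X) (g : C →ₗ[R] Y) :
    bilinConv μ (f + f') g = bilinConv μ f g + bilinConv μ f' g := by
  simp [bilinConv, TensorProduct.map_add_left, LinearMap.add_comp, LinearMap.comp_add]

theorem bilinConv_add_right (μ : X →ₗ[R] Y →ₗ[R] Z) (f : C →ₗ[R] X) (g g' : C →ₗ[R] Y) :
    bilinConv μ f (g + g') = bilinConv μ f g + bilinConv μ f g' := by
  simp [bilinConv, TensorProduct.map_add_right, LinearMap.add_comp, LinearMap.comp_add]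

theorem bilinConv_smul_left (μ : X →ₗ[R] Y →ₗ[R] Z) (r : R) (f : C →ₗ[R] X) (g : C →ₗ[R] Y) :
    bilinConv μ (r • f) g = r • bilinConv μ f g := by
  simp [bilinConv, TensorProduct.map_smul_left, LinearMap.smul_comp, LinearMap.comp_smul]

theorem bilinConv_assoc {μ : Z →ₗ[R] W →ₗ[R] U} {ν : X →ₗ[R] Y →ₗ[R] Z}
    {μ' : X →ₗ[R] V →ₗ[R] U} {ν' : Y →ₗ[R] W →ₗ[R] V}
    (h : ∀ x y w, μ (ν x y) w = μ' x (ν' y w)) (f : C →ₗ[R] X) (g : C →ₗ[R] Y)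
    (q : C →ₗ[R] W) :
    bilinConv μ (bilinConv ν f g) q = bilinConv μ' f (bilinConv ν' g q) := by
  have hmaps : lift μ ∘ₗ map (lift ν ∘ₗ map f g) q
      = lift μ' ∘ₗ map f (lift ν' ∘ₗ map g q) ∘ₗ (TensorProduct.assoc R C C C).toLinearMap :=
    ext_threefold fun x y w => by simp [h]
  ext c
  calc bilinConv μ (bilinConv ν f g) q c
      = (lift μ ∘ₗ map (lift ν ∘ₗ map f g) q) (comul.rTensor C (comul c)) := by
        simp [bilinConv, LinearMap.map_rTensor, LinearMap.comp_assoc]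
    _ = bilinConv μ' f (bilinConv ν' g q) c := by
        rw [hmaps]
        simp [bilinConv, LinearMap.map_lTensor, LinearMap.comp_assoc]

theorem eq_bilinConv_of_rep2 {k C X Y Z : Type} [Field k] [AddCommGroup C] [Module k C]
    [Coalgebra k C] [AddCommMonoid X] [Module k X] [AddCommMonoid Y] [Module k Y]
    [AddCommMonoid Z] [Module k Z] {φ : C →ₗ[k] Z} {μ : X →ₗ[k] Y →ₗ[k] Z} {f : C →ₗ[k] X}
    {g : C →ₗ[k] Y}
    (h : ∀ (ι : Type) (s : Finset ι) (a b : ι → C) (c : C),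
      Rep2 k comul s a b c → φ c = ∑ i ∈ s, μ (f (a i)) (g (b i))) :
    φ = bilinConv μ f g :=
  LinearMap.ext fun c => by
    rw [(ℛ k c).bilinConv_apply]
    exact h _ _ _ _ c (ℛ k c).eq

end Convolution

theorem TensorProduct.induction_on_tmul_tmul {R X Y Z : Type*} [CommSemiring R]
    [AddCommMonoid X] [Module R X] [AddCommMonoid Y] [Module R Y] [AddCommMonoid Z] [Module R Z]
    {p : (X ⊗[R] Y) ⊗[R] Z → Prop} (zero : p 0) (add : ∀ e e', p e → p e' → p (e + e'))
    (tmul : ∀ x y z, p ((x ⊗ₜ y) ⊗ₜ z)) (e : (X ⊗[R] Y) ⊗[R] Z) : p e := by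
  induction e using TensorProduct.induction_on with
  | zero => exact zero
  | add e e' he he' => exact add e e' he he'
  | tmul w z =>
    induction w using TensorProduct.induction_on with
    | zero => simpa using zero
    | add w w' hw hw' => simpa [TensorProduct.add_tmul] using add _ _ hw hw'
    | tmul x y => exact tmul x y z

namespace FODCData

variable {k A M C : Type} [Field k] [Ring A] [Algebra k A] [AddCommGroup M] [Module k M]
  [AddCommMonoid C] [Module k C] [Coalgebra k C] (F : FODCData k A M)

theorem d_comp_bilinConv_mul (f g : C →ₗ[k] A) :
    F.d ∘ₗ bilinConv (LinearMap.mul k A) f g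
      = bilinConv F.r (F.d ∘ₗ f) g + bilinConv F.l f (F.d ∘ₗ g) := by
  have hleibniz : (LinearMap.mul k A).compr₂ F.d
      = F.r.compl₁₂ F.d LinearMap.id + F.l.compl₁₂ LinearMap.id F.d := by
    ext x y
    simp [F.leibniz]
  rw [comp_bilinConv, hleibniz, bilinConv_add, bilinConv_compl₁₂, bilinConv_compl₁₂,
    LinearMap.id_comp, LinearMap.id_comp]

theorem flip_r_eq_bilinConv (act : C →ₗ[k] A →ₗ[k] A) (hact : C →ₗ[k] M →ₗ[k] M)
    (act_mul : ∀ x y : A,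
      act.flip (x * y) = bilinConv (LinearMap.mul k A) (act.flip x) (act.flip y))
    (hact_l_d : ∀ a b : A,
      hact.flip (F.l a (F.d b)) = bilinConv F.l (act.flip a) (hact.flip (F.d b)))
    (d_act : ∀ (c : C) (a : A), F.d (act c a) = hact c (F.d a)) (β : M) (b : A) :
    hact.flip (F.r β b) = bilinConv F.r (hact.flip β) (act.flip b) := by
  have d_comp_act : ∀ a : A, F.d ∘ₗ act.flip a = hact.flip (F.d a) := fun a =>
    LinearMap.ext fun c => d_act c a
  induction F.spanning β using Submodule.span_induction with
  | mem β hβ =>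
    obtain ⟨a, c, rfl⟩ := hβ
    have hβb : F.r (F.l a (F.d c)) b = F.l a (F.d (c * b)) - F.l (a * c) (F.d b) := by
      rw [F.l_r, F.leibniz, map_add, F.mul_l]
      abel
    have hlr := bilinConv_assoc F.l_r (act.flip a) (hact.flip (F.d c)) (act.flip b)
    have hll := bilinConv_assoc (μ := F.l) (ν := LinearMap.mul k A) (μ' := F.l) (ν' := F.l)
      (fun x y m => F.mul_l x y m) (act.flip a) (act.flip c) (hact.flip (F.d b))
    rw [hβb, map_sub, hact_l_d, ← d_comp_act, act_mul, d_comp_bilinConv_mul, d_comp_act, d_comp_act,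
      bilinConv_add_right, ← hlr, ← hll, ← act_mul, ← hact_l_d, ← hact_l_d, add_sub_cancel_right]
  | zero => ext; simp [bilinConv]
  | add β β' _ _ hβ hβ' =>
    rw [map_add, LinearMap.add_apply, map_add, hβ, hβ', map_add, bilinConv_add_left]
  | smul r β _ hβ =>
    rw [map_smul, LinearMap.smul_apply, map_smul, hβ, map_smul, bilinConv_smul_left]

end FODCData

section Balancing

variable {k A M E : Type} [Field k] [AddCommMonoid A] [Module k A] [AddCommGroup M] [Module k M]
  [AddCommMonoid E] [Module k E]

/-- The relations `β·a ⊗ x - β ⊗ a·x` whose quotient turns `M ⊗[k] E` into `M ⊗_A E`. -/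
def balancingRel (r : M →ₗ[k] A →ₗ[k] M) (l : A →ₗ[k] E →ₗ[k] E) : Submodule k (M ⊗[k] E) :=
  Submodule.span k {y | ∃ (β : M) (a : A) (x : E), y = r β a ⊗ₜ[k] x - β ⊗ₜ[k] l a x}

theorem mkQ_balancingRel_tmul (r : M →ₗ[k] A →ₗ[k] M) (l : A →ₗ[k] E →ₗ[k] E) (β : M) (a : A)
    (x : E) : (balancingRel r l).mkQ (r β a ⊗ₜ[k] x) = (balancingRel r l).mkQ (β ⊗ₜ[k] l a x) :=
  (Submodule.Quotient.eq _).2 (Submodule.subset_span ⟨β, a, x, rfl⟩)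

end Balancing

section AssociatedBundle

variable {k A C M V : Type} [Field k] [Ring A] [Algebra k A] [AddCommGroup C] [Module k C]
  [AddCommGroup M] [Module k M] [AddCommGroup V] [Module k V]
  {LB : A →ₗ[k] (A ⊗[k] C) ⊗[k] V →ₗ[k] (A ⊗[k] C) ⊗[k] V}
  {D₀ : (A ⊗[k] C) ⊗[k] V →ₗ[k] M ⊗[k] ((A ⊗[k] C) ⊗[k] V)}

theorem nabla_leibniz (F : FODCData k A M)
    (hLB : ∀ (a b : A) (c : C) (v : V), LB a ((b ⊗ₜ[k] c) ⊗ₜ[k] v) = ((a * b) ⊗ₜ[k] c) ⊗ₜ[k] v)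
    (hD₀ : ∀ (b : A) (c : C) (v : V),
      D₀ ((b ⊗ₜ[k] c) ⊗ₜ[k] v) = F.d b ⊗ₜ[k] (((1 : A) ⊗ₜ[k] c) ⊗ₜ[k] v))
    (e : (A ⊗[k] C) ⊗[k] V) (a : A) :
    (balancingRel F.r LB).mkQ (D₀ (LB a e))
      = (balancingRel F.r LB).mkQ
          (F.d a ⊗ₜ[k] e + TensorProduct.map (F.l a) LinearMap.id (D₀ e)) := by
  induction e using TensorProduct.induction_on_tmul_tmul with
  | zero => simp
  | add e e' he he' =>
    simp only [map_add, TensorProduct.tmul_add] at he he' ⊢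
    rw [he, he']
    abel
  | tmul b c v =>
    rw [hLB, hD₀, hD₀, F.leibniz, TensorProduct.map_tmul, TensorProduct.add_tmul, map_add, map_add,
      mkQ_balancingRel_tmul, hLB, mul_one, LinearMap.id_apply]

variable [Coalgebra k C] {SE : (A ⊗[k] C) ⊗[k] V →ₗ[k] M →ₗ[k] M ⊗[k] ((A ⊗[k] C) ⊗[k] V)}
  {hact : C →ₗ[k] M →ₗ[k] M}

open Coalgebra

theorem sigma_lmul (F : BimodData k A M)
    (hLB : ∀ (a b : A) (c : C) (v : V), LB a ((b ⊗ₜ[k] c) ⊗ₜ[k] v) = ((a * b) ⊗ₜ[k] c) ⊗ₜ[k] v)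
    (hSE : ∀ (b : A) (c : C) (v : V) (β : M) (ι : Type) (s : Finset ι) (g₁ g₂ : ι → C),
      Rep2 k comul s g₁ g₂ c → SE ((b ⊗ₜ[k] c) ⊗ₜ[k] v) β
        = ∑ i ∈ s, F.l b (hact (g₁ i) β) ⊗ₜ[k] (((1 : A) ⊗ₜ[k] g₂ i) ⊗ₜ[k] v))
    (e : (A ⊗[k] C) ⊗[k] V) (β : M) (a : A) :
    SE (LB a e) β = TensorProduct.map (F.l a) LinearMap.id (SE e β) := by
  induction e using TensorProduct.induction_on_tmul_tmul with
  | zero => simp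
  | add e e' he he' => simp only [map_add, LinearMap.add_apply, he, he']
  | tmul b c v =>
    let 𝓡 := ℛ k c
    simp only [hLB, hSE _ c v β _ 𝓡.index 𝓡.left 𝓡.right 𝓡.eq, map_sum, TensorProduct.map_tmul,
      F.mul_l, LinearMap.id_apply]

theorem sigma_rmul (F : BimodData k A M) (act : C →ₗ[k] A →ₗ[k] A)
    {RB : (A ⊗[k] C) ⊗[k] V →ₗ[k] A →ₗ[k] (A ⊗[k] C) ⊗[k] V}
    (hact_r : ∀ (β : M) (a : A), hact.flip (F.r β a) = bilinConv F.r (hact.flip β) (act.flip a))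
    (hLB : ∀ (a b : A) (c : C) (v : V), LB a ((b ⊗ₜ[k] c) ⊗ₜ[k] v) = ((a * b) ⊗ₜ[k] c) ⊗ₜ[k] v)
    (hRB : ∀ (b a : A) (c : C) (v : V) (ι : Type) (s : Finset ι) (g₁ g₂ : ι → C),
      Rep2 k comul s g₁ g₂ c →
        RB ((b ⊗ₜ[k] c) ⊗ₜ[k] v) a = ∑ i ∈ s, ((b * act (g₁ i) a) ⊗ₜ[k] g₂ i) ⊗ₜ[k] v)
    (hSE : ∀ (b : A) (c : C) (v : V) (β : M) (ι : Type) (s : Finset ι) (g₁ g₂ : ι → C),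
      Rep2 k comul s g₁ g₂ c → SE ((b ⊗ₜ[k] c) ⊗ₜ[k] v) β
        = ∑ i ∈ s, F.l b (hact (g₁ i) β) ⊗ₜ[k] (((1 : A) ⊗ₜ[k] g₂ i) ⊗ₜ[k] v))
    (e : (A ⊗[k] C) ⊗[k] V) (β : M) (a : A) :
    (balancingRel F.r LB).mkQ (SE e (F.r β a))
      = (balancingRel F.r LB).mkQ (TensorProduct.map LinearMap.id (RB.flip a) (SE e β)) := by
  induction e using TensorProduct.induction_on_tmul_tmul with
  | zero => simp
  | add e e' he he' => simp only [map_add, LinearMap.add_apply, he, he']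
  | tmul b c v =>
    set rel := balancingRel F.r LB
    let Xv : C →ₗ[k] (A ⊗[k] C) ⊗[k] V :=
      (TensorProduct.mk k (A ⊗[k] C) V).flip v ∘ₗ TensorProduct.mk k A C 1
    let π : M →ₗ[k] (A ⊗[k] C) ⊗[k] V →ₗ[k] (M ⊗[k] ((A ⊗[k] C) ⊗[k] V)) ⧸ rel :=
      (TensorProduct.mk k M _).compr₂ rel.mkQ ∘ₗ F.l b
    have hπ : ∀ m y x, π (F.r m y) x = π m (LB y x) := fun m y x => by
      simp only [π, LinearMap.comp_apply, LinearMap.compr₂_apply, TensorProduct.mk_apply, ← F.l_r]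
      exact mkQ_balancingRel_tmul _ _ _ _ _
    have hRB_conv : bilinConv LB (act.flip a) Xv = RB.flip a ∘ₗ Xv := by
      ext c'
      rw [(ℛ k c').bilinConv_apply]
      simp [Xv, hRB 1 a c' v _ _ _ _ (ℛ k c').eq, hLB]
    calc rel.mkQ (SE ((b ⊗ₜ[k] c) ⊗ₜ[k] v) (F.r β a))
        = bilinConv π (hact.flip (F.r β a)) Xv c := by
          rw [(ℛ k c).bilinConv_apply, hSE _ c v _ _ _ _ _ (ℛ k c).eq, map_sum]
          rfl
      _ = bilinConv π (hact.flip β) (RB.flip a ∘ₗ Xv) c := by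
          rw [hact_r, bilinConv_assoc hπ, hRB_conv]
      _ = rel.mkQ (TensorProduct.map LinearMap.id (RB.flip a) (SE ((b ⊗ₜ[k] c) ⊗ₜ[k] v) β)) := by
          rw [(ℛ k c).bilinConv_apply, hSE _ c v _ _ _ _ _ (ℛ k c).eq, map_sum, map_sum]
          rfl

theorem nabla_twisted_leibniz (F : FODCData k A M) (act : C →ₗ[k] A →ₗ[k] A)
    {RB : (A ⊗[k] C) ⊗[k] V →ₗ[k] A →ₗ[k] (A ⊗[k] C) ⊗[k] V}
    (d_act : ∀ (c : C) (b : A), F.d (act c b) = hact c (F.d b))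
    (hLB : ∀ (a b : A) (c : C) (v : V), LB a ((b ⊗ₜ[k] c) ⊗ₜ[k] v) = ((a * b) ⊗ₜ[k] c) ⊗ₜ[k] v)
    (hRB : ∀ (b a : A) (c : C) (v : V) (ι : Type) (s : Finset ι) (g₁ g₂ : ι → C),
      Rep2 k comul s g₁ g₂ c →
        RB ((b ⊗ₜ[k] c) ⊗ₜ[k] v) a = ∑ i ∈ s, ((b * act (g₁ i) a) ⊗ₜ[k] g₂ i) ⊗ₜ[k] v)
    (hD₀ : ∀ (b : A) (c : C) (v : V),
      D₀ ((b ⊗ₜ[k] c) ⊗ₜ[k] v) = F.d b ⊗ₜ[k] (((1 : A) ⊗ₜ[k] c) ⊗ₜ[k] v))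
    (hSE : ∀ (b : A) (c : C) (v : V) (β : M) (ι : Type) (s : Finset ι) (g₁ g₂ : ι → C),
      Rep2 k comul s g₁ g₂ c → SE ((b ⊗ₜ[k] c) ⊗ₜ[k] v) β
        = ∑ i ∈ s, F.l b (hact (g₁ i) β) ⊗ₜ[k] (((1 : A) ⊗ₜ[k] g₂ i) ⊗ₜ[k] v))
    (e : (A ⊗[k] C) ⊗[k] V) (a : A) :
    (balancingRel F.r LB).mkQ (D₀ (RB e a))
      = (balancingRel F.r LB).mkQ
          (SE e (F.d a) + TensorProduct.map LinearMap.id (RB.flip a) (D₀ e)) := by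
  induction e using TensorProduct.induction_on_tmul_tmul with
  | zero => simp
  | add e e' he he' =>
    simp only [map_add, LinearMap.add_apply] at he he' ⊢
    rw [he, he']
    abel
  | tmul b c v =>
    let 𝓡 := ℛ k c
    rw [hRB b a c v _ _ _ _ 𝓡.eq, hSE b c v _ _ _ _ _ 𝓡.eq, hD₀, TensorProduct.map_tmul,
      LinearMap.flip_apply, hRB 1 a c v _ _ _ _ 𝓡.eq, TensorProduct.tmul_sum, map_sum, map_sum,
      map_add, map_sum, map_sum, ← Finset.sum_add_distrib]
    refine Finset.sum_congr rfl fun i _ => ?_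
    rw [hD₀, F.leibniz, d_act, TensorProduct.add_tmul, map_add, add_comm, mkQ_balancingRel_tmul,
      hLB, mul_one, one_mul, LinearMap.id_apply]

end AssociatedBundle

theorem associated_bundle_bimodule_covariant_derivative
    (T : TwistedSystem k B H)
    (M : Type) [AddCommGroup M] [Module k M]
    -- `(Ω¹(B), d_B)` a `σ`-twisted `H`-module FODC on `B`:
    (F : FODCData k B M) (hact : H →ₗ[k] M →ₗ[k] M)
    (h_comp : ∀ (ι : Type) (s : Finset ι) (f g : ι → H) (h : H),
      Rep2 k (Coalgebra.comul (R := k)) s f g h → ∀ b b' : B,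
        hact h (F.l b (F.d b')) = ∑ i ∈ s, F.l (T.act (f i) b) (hact (g i) (F.d b')))
    (h_lin : ∀ (h : H) (b : B), F.d (T.act h b) = hact h (F.d b))
    (V : Type) [AddCommGroup V] [Module k V]
    -- the diagonal coaction on `(B ⊗ H) ⊗ V` defining the coinvariants `E`:
    (ρE : ((B ⊗[k] H) ⊗[k] V) →ₗ[k] ((B ⊗[k] H) ⊗[k] V) ⊗[k] H)
    -- the `B`-bimodule structure of the associated bundle:
    (LB : B →ₗ[k] ((B ⊗[k] H) ⊗[k] V) →ₗ[k] ((B ⊗[k] H) ⊗[k] V))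
    (hLB : ∀ (b' b : B) (h : H) (v : V),
      LB b' ((b ⊗ₜ[k] h) ⊗ₜ[k] v) = ((b' * b) ⊗ₜ[k] h) ⊗ₜ[k] v)
    (RB : ((B ⊗[k] H) ⊗[k] V) →ₗ[k] B →ₗ[k] ((B ⊗[k] H) ⊗[k] V))
    (hRB : ∀ (b b' : B) (h : H) (v : V) (ι : Type) (s : Finset ι) (g₁ g₂ : ι → H),
      Rep2 k (Coalgebra.comul (R := k)) s g₁ g₂ h →
        RB ((b ⊗ₜ[k] h) ⊗ₜ[k] v) b'
          = ∑ i ∈ s, ((b * T.act (g₁ i) b') ⊗ₜ[k] g₂ i) ⊗ₜ[k] v)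
    -- the covariant derivative `∇_E` (before passing to `Ω¹(B) ⊗_B E`):
    (D₀ : ((B ⊗[k] H) ⊗[k] V) →ₗ[k] M ⊗[k] ((B ⊗[k] H) ⊗[k] V))
    (hD₀ : ∀ (b : B) (h : H) (v : V),
      D₀ ((b ⊗ₜ[k] h) ⊗ₜ[k] v) = (F.d b) ⊗ₜ[k] (((1 : B) ⊗ₜ[k] h) ⊗ₜ[k] v))
    -- the map `σ_E` (before passing to the quotient):
    (SE : ((B ⊗[k] H) ⊗[k] V) →ₗ[k] M →ₗ[k] M ⊗[k] ((B ⊗[k] H) ⊗[k] V))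
    (hSE : ∀ (b : B) (h : H) (v : V) (β : M) (ι : Type) (s : Finset ι) (g₁ g₂ : ι → H),
      Rep2 k (Coalgebra.comul (R := k)) s g₁ g₂ h →
        SE ((b ⊗ₜ[k] h) ⊗ₜ[k] v) β
          = ∑ i ∈ s, (F.l b (hact (g₁ i) β)) ⊗ₜ[k] (((1 : B) ⊗ₜ[k] g₂ i) ⊗ₜ[k] v)) :
    -- tensoring over `B`: quotient by the `B`-balancing relations
    let rel : Submodule k (M ⊗[k] ((B ⊗[k] H) ⊗[k] V)) :=
      Submodule.span k {y | ∃ (β : M) (b : B) (x : (B ⊗[k] H) ⊗[k] V),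
        y = (F.r β b) ⊗ₜ[k] x - β ⊗ₜ[k] (LB b x)}
    -- `∇_E` satisfies the left Leibniz rule in `Ω¹(B) ⊗_B E` …
    (∀ e : (B ⊗[k] H) ⊗[k] V, ρE e = e ⊗ₜ[k] (1 : H) → ∀ b : B,
      rel.mkQ (D₀ (LB b e))
        = rel.mkQ ((F.d b) ⊗ₜ[k] e + (TensorProduct.map (F.l b) LinearMap.id) (D₀ e))) ∧
    -- … `σ_E` is a `B`-bimodule map …
    (∀ (e : (B ⊗[k] H) ⊗[k] V) (β : M) (b : B), ρE e = e ⊗ₜ[k] (1 : H) →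
      rel.mkQ (SE (LB b e) β)
        = rel.mkQ ((TensorProduct.map (F.l b) LinearMap.id) (SE e β))) ∧
    (∀ (e : (B ⊗[k] H) ⊗[k] V) (β : M) (b' : B), ρE e = e ⊗ₜ[k] (1 : H) →
      rel.mkQ (SE e (F.r β b'))
        = rel.mkQ ((TensorProduct.map LinearMap.id (RB.flip b')) (SE e β))) ∧
    -- … and the twisted right Leibniz rule `∇_E(e·b') = σ_E(e ⊗ d_B b') + (∇_E e)·b'` holds:
    (∀ (e : (B ⊗[k] H) ⊗[k] V) (b' : B), ρE e = e ⊗ₜ[k] (1 : H) →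
      rel.mkQ (D₀ (RB e b'))
        = rel.mkQ (SE e (F.d b')
            + (TensorProduct.map LinearMap.id (RB.flip b')) (D₀ e))) := by
  intro rel
  have act_mul : ∀ x y : B, T.act.flip (x * y)
      = bilinConv (LinearMap.mul k B) (T.act.flip x) (T.act.flip y) := fun x y =>
    eq_bilinConv_of_rep2 fun ι s f g h hs => T.act_mul ι s f g h hs x y
  have hact_l_d : ∀ a b : B, hact.flip (F.l a (F.d b))
      = bilinConv F.l (T.act.flip a) (hact.flip (F.d b)) := fun a b =>
    eq_bilinConv_of_rep2 fun ι s f g h hs => h_comp ι s f g h hs a b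
  have hact_r := F.flip_r_eq_bilinConv T.act hact act_mul hact_l_d h_lin
  exact ⟨fun e _ b => nabla_leibniz F hLB hD₀ e b,
    fun e β b _ => congrArg rel.mkQ (sigma_lmul F.toBimodData hLB hSE e β b),
    fun e β b' _ => sigma_rmul F.toBimodData T.act hact_r hLB hRB hSE e β b',
    fun e b' _ => nabla_twisted_leibniz F T.act h_lin hLB hRB hD₀ hSE e b'⟩

end
end
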